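/- arXiv:2303.06166 — 8 statements merged into one kernel-verified Lean document; each statement's English description precedes it below -/
import Mathlib

section
/- Let M be a finitely generated free O_K-module equipped with a ℤ_p-algebra homomorphism ι : O_F → End_{O_K}(M). Then for every subset I of the set of ℚ_p-algebra embeddings of F into K, the O_K-submodule M_I := M ∩ (⊕_{τ∈I} M_{K,τ}) of M is a direct summand of M, and M_I is a free O_K-module of rank ∑_{τ∈I} dim_K M_{K,τ}. -/
/-!
STATEMENT 0 (Lemma 3.5, part 1): for `M` a finitely generated free `O_K`-module with an
`O_F`-action `ι`, and any set `I` of embeddings `τ : F → K`, the submodule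
`M_I = M ∩ ⊕_{τ ∈ I} M_{K,τ}` is a direct summand of `M`, free of rank `∑_{τ ∈ I} dim_K M_{K,τ}`.
-/

open scoped TensorProduct

universe u


/-- Over a Bezout domain, a finite module that injects into a finite free module is free. -/
theorem free_of_inj_pi {A : Type*} [CommRing A] [IsDomain A] [IsBezout A] :
    ∀ (n : ℕ) {P : Type u} [AddCommGroup P] [Module A P] [Module.Finite A P]
      (f : P →ₗ[A] (Fin n → A)), Function.Injective f → Module.Free A P := by
  intro n
  induction n with
  | zero =>
    intro P _ _ _ f hf
    have : Subsingleton P := ⟨fun a b => hf (Subsingleton.elim _ _)⟩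
    exact Module.Free.of_basis (Module.Basis.empty P (ι := Fin 0))
  | succ n ih =>
    intro P _ _ _ f hf
    classical
    set φ : P →ₗ[A] A := (LinearMap.proj 0).comp f with hφdef
    have hJfg : (LinearMap.range φ).FG := by
      have h1 := (Module.Finite.fg_top (R := A) (M := P)).map φ
      rwa [Submodule.map_top] at h1
    obtain ⟨a, hJ⟩ := (IsBezout.isPrincipal_of_FG _ hJfg).principal
    set g : P →ₗ[A] (Fin n → A) := LinearMap.pi (fun i => (LinearMap.proj (Fin.succ i)).comp f)
      with hgdef
    have hgapp : ∀ x i, g x i = f x (Fin.succ i) := fun x i => rfl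
    by_cases ha : a = 0
    · have hφ0 : ∀ x, φ x = 0 := by
        intro x
        have hx : φ x ∈ Submodule.span A {a} := hJ ▸ LinearMap.mem_range_self φ x
        obtain ⟨c, hc⟩ := Submodule.mem_span_singleton.mp hx
        simp [ha] at hc
        exact hc.symm
      have hg : Function.Injective g := by
        intro x y hxy
        apply hf
        funext j
        refine Fin.cases ?_ ?_ j
        · have hx := hφ0 x; have hy := hφ0 y
          simp only [hφdef, LinearMap.comp_apply, LinearMap.proj_apply] at hx hy
          rw [hx, hy]
        · intro i
          have := congrFun hxy i
          rw [hgapp, hgapp] at this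
          exact this
      exact ih g hg
    · obtain ⟨p0, hp0⟩ : a ∈ LinearMap.range φ := hJ ▸ Submodule.mem_span_singleton_self a
      set s : A →ₗ[A] P := LinearMap.toSpanSingleton A P p0 with hsdef
      have hsφ : ∀ c : A, φ (c • p0) = c * a := by
        intro c; rw [map_smul, hp0, smul_eq_mul]
      have hdisj : Disjoint (LinearMap.ker φ) (LinearMap.range s) := by
        rw [Submodule.disjoint_def]
        rintro x hx ⟨c, rfl⟩
        have h0 : c * a = 0 := by
          have := LinearMap.mem_ker.mp hx
          rwa [hsdef, LinearMap.toSpanSingleton_apply, hsφ] at this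
        rcases mul_eq_zero.mp h0 with hc | hc
        · simp [hsdef, hc]
        · exact absurd hc ha
      have hcod : LinearMap.ker φ ⊔ LinearMap.range s = ⊤ := by
        rw [eq_top_iff]
        rintro p -
        have hp : φ p ∈ Submodule.span A {a} := hJ ▸ LinearMap.mem_range_self φ p
        obtain ⟨c, hc⟩ := Submodule.mem_span_singleton.mp hp
        have h1 : p - c • p0 ∈ LinearMap.ker φ := by
          rw [LinearMap.mem_ker, map_sub, hsφ, ← smul_eq_mul, hc, sub_self]
        have h2 : (c • p0 : P) ∈ LinearMap.range s := ⟨c, by rw [hsdef, LinearMap.toSpanSingleton_apply]⟩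
        have : p = (p - c • p0) + c • p0 := by abel
        exact this ▸ Submodule.add_mem_sup h1 h2
      have hcompl : IsCompl (LinearMap.ker φ) (LinearMap.range s) :=
        ⟨hdisj, codisjoint_iff.mpr hcod⟩
      haveI : Module.Finite A (LinearMap.ker φ) :=
        Module.Finite.equiv
          (Submodule.quotientEquivOfIsCompl (LinearMap.range s) (LinearMap.ker φ) hcompl.symm)
      have hginj : Function.Injective (g.comp (LinearMap.ker φ).subtype) := by
        intro x y hxy
        apply Subtype.ext
        apply hf
        funext j
        refine Fin.cases ?_ ?_ j
        · have hx := LinearMap.mem_ker.mp x.2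
          have hy := LinearMap.mem_ker.mp y.2
          simp only [hφdef, LinearMap.comp_apply, LinearMap.proj_apply] at hx hy
          rw [hx, hy]
        · intro i
          have := congrFun hxy i
          simpa only [LinearMap.comp_apply, hgapp, Submodule.subtype_apply] using this
      haveI : Module.Free A (LinearMap.ker φ) := ih _ hginj
      have hsinj : Function.Injective s := by
        rw [injective_iff_map_eq_zero]
        intro c hc
        have : c * a = 0 := by
          rw [← hsφ c]
          rw [hsdef, LinearMap.toSpanSingleton_apply] at hc
          rw [hc, map_zero]
        rcases mul_eq_zero.mp this with h | h
        · exact h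
        · exact absurd h ha
      haveI : Module.Free A (LinearMap.range s) :=
        Module.Free.of_equiv (LinearEquiv.ofInjective s hsinj)
      exact Module.Free.of_equiv (Submodule.prodEquivOfIsCompl _ _ hcompl)


theorem valuationSubring_smul_def {K : Type*} [Field K] {A : ValuationSubring K}
    (a : A) (x : K) : a • x = (a : K) * x := Algebra.smul_def a x

set_option maxHeartbeats 1000000 in
/-- Over a valuation subring of `K`, a finite module that injects into a finite `K`-power
is free. -/
theorem free_of_inj_piK {K : Type*} [Field K] (A : ValuationSubring K) (n : ℕ)
    {P : Type u} [AddCommGroup P] [Module A P] [Module.Finite A P]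
    (f : P →ₗ[A] (Fin n → K)) (hf : Function.Injective f) : Module.Free A P := by
  classical
  obtain ⟨t, ht⟩ := Module.Finite.fg_top (R := A) (M := P)
  set s : Finset K := t.biUnion (fun x => Finset.image (fun i => f x i) Finset.univ) with hsdef
  obtain ⟨b, hb⟩ := IsLocalization.exist_integer_multiples_of_finset (nonZeroDivisors A) (S := K) s
  have hbne : (b : A) ≠ 0 := nonZeroDivisors.coe_ne_zero b
  have hbKne : (((b : A) : K)) ≠ 0 := by
    simpa using hbne
  set g : P →ₗ[A] (Fin n → K) := (b : A) • f with hgdef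
  have hgapp : ∀ x i, g x i = ((b : A) : K) * (f x i) := by
    intro x i
    show ((b : A) • f) x i = _
    rw [LinearMap.smul_apply, Pi.smul_apply, valuationSubring_smul_def]
  have hginj : Function.Injective g := by
    intro x y hxy
    apply hf
    funext i
    have h1 : ((b : A) : K) * f x i = ((b : A) : K) * f y i := by
      rw [← hgapp, ← hgapp, hxy]
    exact mul_left_cancel₀ hbKne h1
  -- every coordinate of `g` lands in `A`
  set R1 : Submodule A K := LinearMap.range (Algebra.linearMap A K) with hR1def
  have hmemR1 : ∀ (x : P) (i : Fin n), g x i ∈ R1 := by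
    have hsub : (t : Set P) ⊆
        ↑(⨅ i : Fin n, Submodule.comap ((LinearMap.proj i).comp g) R1) := by
      intro x hx
      simp only [SetLike.mem_coe, Submodule.mem_iInf]
      intro i
      have hfs : f x i ∈ s := by
        rw [hsdef]
        exact Finset.mem_biUnion.mpr ⟨x, hx, Finset.mem_image.mpr ⟨i, Finset.mem_univ i, rfl⟩⟩
      obtain ⟨c, hc⟩ := hb _ hfs
      refine Submodule.mem_comap.mpr ⟨c, ?_⟩
      show algebraMap A K c = g x i
      rw [hc, hgapp, Algebra.smul_def]
      rfl
    have htop : (⊤ : Submodule A P) ≤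
        ⨅ i : Fin n, Submodule.comap ((LinearMap.proj i).comp g) R1 := by
      rw [← ht]
      exact Submodule.span_le.mpr hsub
    intro x i
    have := htop (Submodule.mem_top (x := x))
    exact Submodule.mem_iInf _ |>.mp this i
  have halg : Function.Injective (Algebra.linearMap A K) := by
    intro x y hxy
    exact Subtype.ext hxy
  set e : A ≃ₗ[A] R1 := LinearEquiv.ofInjective (Algebra.linearMap A K) halg with hedef
  set h : P →ₗ[A] (Fin n → A) := LinearMap.pi (fun i =>
    e.symm.toLinearMap ∘ₗ
      LinearMap.codRestrict R1 ((LinearMap.proj i).comp g) (fun x => hmemR1 x i)) with hhdef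
  have hhinj : Function.Injective h := by
    intro x y hxy
    apply hginj
    funext i
    have h1 := congrFun hxy i
    have h2 : e.symm (⟨g x i, hmemR1 x i⟩ : R1) = e.symm (⟨g y i, hmemR1 y i⟩ : R1) := h1
    have h3 : (⟨g x i, hmemR1 x i⟩ : R1) = ⟨g y i, hmemR1 y i⟩ := e.symm.injective h2
    exact congrArg Subtype.val h3
  exact free_of_inj_pi n h hhinj

/-- Clearing denominators in `K ⊗[A] M`. -/
theorem exists_denominator {K : Type*} [Field K] (A : ValuationSubring K)
    {M : Type*} [AddCommGroup M] [Module A M] (x : K ⊗[A] M) :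
    ∃ a : A, a ≠ 0 ∧ a • x ∈ LinearMap.range (TensorProduct.mk A K M 1) := by
  induction x with
  | zero => exact ⟨1, one_ne_zero, by simp⟩
  | tmul k m =>
    obtain ⟨b, c, hc⟩ := IsLocalization.exists_integer_multiple (nonZeroDivisors A) k
    refine ⟨(b : A), nonZeroDivisors.coe_ne_zero b, ⟨c • m, ?_⟩⟩
    show (1 : K) ⊗ₜ[A] (c • m) = (b : A) • (k ⊗ₜ[A] m)
    rw [TensorProduct.tmul_smul, TensorProduct.smul_tmul']
    rw [TensorProduct.smul_tmul']
    congr 1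
    rw [valuationSubring_smul_def, valuationSubring_smul_def, mul_one]
    have hcc : ((c : K)) = algebraMap A K c := rfl
    rw [hcc, hc, valuationSubring_smul_def]
  | add x y hx hy =>
    obtain ⟨a, ha, m1, hm1⟩ := hx
    obtain ⟨a', ha', m2, hm2⟩ := hy
    refine ⟨a * a', mul_ne_zero ha ha', ?_⟩
    have h1 : (a * a') • x = a' • (a • x) := by rw [mul_comm, mul_smul]
    have h2 : (a * a') • y = a • (a' • y) := by rw [mul_smul]
    rw [smul_add, h1, h2]
    exact Submodule.add_mem _
      (Submodule.smul_mem _ _ ⟨m1, hm1⟩)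
      (Submodule.smul_mem _ _ ⟨m2, hm2⟩)

/-- finrank of a finite supremum of independent subspaces. -/
theorem finrank_biSup_of_independent {K V : Type*} [Field K] [AddCommGroup V] [Module K V]
    [FiniteDimensional K V] {ι : Type*} [DecidableEq ι] (W : ι → Submodule K V)
    (h : iSupIndep W) (I : Finset ι) :
    Module.finrank K (⨆ τ ∈ I, W τ : Submodule K V) = ∑ τ ∈ I, Module.finrank K (W τ) := by
  classical
  induction I using Finset.induction_on with
  | empty => simp
  | @insert a s ha ih =>
    have hsup : (⨆ τ ∈ insert a s, W τ) = W a ⊔ ⨆ τ ∈ s, W τ := Finset.iSup_insert a s W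
    have hd : Disjoint (W a) (⨆ τ ∈ s, W τ : Submodule K V) := by
      have := h.disjoint_biSup (y := (↑s : Set ι)) (by simpa using ha)
      simpa using this
    have hrk := Submodule.finrank_sup_add_finrank_inf_eq (W a) (⨆ τ ∈ s, W τ)
    rw [disjoint_iff.mp hd, finrank_bot, add_zero] at hrk
    rw [hsup, hrk, ih, Finset.sum_insert ha]


/-- The eigenspace `M_{K,τ} = {w ∈ M ⊗_{O_K} K | ι(a) w = τ(a) • w for all a ∈ O_F}`. -/
noncomputable def eigenspaceOF {p : ℕ} [Fact p.Prime] {K : Type*} [Field K] [Algebra ℚ_[p] K]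
    (A : ValuationSubring K) {F : Type*} [Field F] [Algebra ℚ_[p] F] (OF : Subring F)
    {M : Type*} [AddCommGroup M] [Module A M] (ι : OF →+* Module.End A M)
    (τ : F →ₐ[ℚ_[p]] K) : Submodule K (K ⊗[A] M) :=
  ⨅ a : OF, LinearMap.ker ((ι a).baseChange K - τ (a : F) • LinearMap.id)

/-- `M_I = M ∩ ⊕_{τ ∈ I} M_{K,τ}`, as a submodule of `M` (the intersection being taken inside
`M_K = M ⊗_{O_K} K`, into which `M` maps via `x ↦ 1 ⊗ x`). -/
noncomputable def integralPartOF {p : ℕ} [Fact p.Prime] {K : Type*} [Field K] [Algebra ℚ_[p] K]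
    (A : ValuationSubring K) {F : Type*} [Field F] [Algebra ℚ_[p] F] (OF : Subring F)
    {M : Type*} [AddCommGroup M] [Module A M] (ι : OF →+* Module.End A M)
    (I : Finset (F →ₐ[ℚ_[p]] K)) : Submodule A M :=
  Submodule.comap (TensorProduct.mk A K M 1)
    ((⨆ τ ∈ I, eigenspaceOF A OF ι τ).restrictScalars A)

set_option maxHeartbeats 2000000 in
set_option synthInstance.maxHeartbeats 400000 in
theorem statement0
    -- the complete rank-one valued field `(K, v)` extending `ℚ_p`, with valuation ring `O_K = A`
    {p : ℕ} [Fact p.Prime] {K : Type*} [Field K] [Algebra ℚ_[p] K]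
    (v : K → ℝ)
    (hv_mul : ∀ x y : K, x ≠ 0 → y ≠ 0 → v (x * y) = v x + v y)
    (hv_add : ∀ x y : K, x ≠ 0 → y ≠ 0 → x + y ≠ 0 → min (v x) (v y) ≤ v (x + y))
    (hv_p : v (p : K) = 1)
    (A : ValuationSubring K)
    (hA : ∀ x : K, x ≠ 0 → (x ∈ A ↔ 0 ≤ v x))
    -- the finite extension `F` of `ℚ_p`, its ring of integers `O_F`, uniformiser `π`,
    -- ramification index `e`; `K` contains a Galois closure of `F|ℚ_p`
    {F : Type*} [Field F] [Algebra ℚ_[p] F] [FiniteDimensional ℚ_[p] F]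
    [Fintype (F →ₐ[ℚ_[p]] K)] [DecidableEq (F →ₐ[ℚ_[p]] K)]
    (OF : Subring F) (π : OF) (e : ℕ) (he : 0 < e)
    (hπe : ∃ u : OFˣ, (π : F) ^ e = (p : F) * ((u : OF) : F))
    (hτO : ∀ (τ : F →ₐ[ℚ_[p]] K) (x : OF), τ (x : F) ∈ A)
    (hτπ : ∀ τ : F →ₐ[ℚ_[p]] K, v (τ (π : F)) = 1 / e)
    -- the finitely generated free `O_K`-module `M` with `O_F`-action `ι`,
    -- and the eigenspace decomposition `M_K = ⊕_τ M_{K,τ}`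
    {M : Type*} [AddCommGroup M] [Module A M] [Module.Free A M] [Module.Finite A M]
    (ι : OF →+* Module.End A M)
    (hdec : DirectSum.IsInternal (fun τ : F →ₐ[ℚ_[p]] K => eigenspaceOF A OF ι τ))
    (I : Finset (F →ₐ[ℚ_[p]] K)) :
    (∃ N : Submodule A M, IsCompl (integralPartOF A OF ι I) N) ∧
      Module.Free A (integralPartOF A OF ι I) ∧
      Module.finrank A (integralPartOF A OF ι I)
        = ∑ τ ∈ I, Module.finrank K (eigenspaceOF A OF ι τ) := by
  classical
  set W : (F →ₐ[ℚ_[p]] K) → Submodule K (K ⊗[A] M) := eigenspaceOF A OF ι with hWdef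
  set V : Submodule K (K ⊗[A] M) := ⨆ τ ∈ I, W τ with hVdef
  set fmk : M →ₗ[A] K ⊗[A] M := TensorProduct.mk A K M 1 with hfmkdef
  set N : Submodule A M := integralPartOF A OF ι I with hNdef'
  have hNdef : N = Submodule.comap fmk (V.restrictScalars A) := rfl
  haveI : Module.Finite K (K ⊗[A] M) := inferInstance
  -- the quotient `M ⧸ N` embeds into `(K ⊗ M) ⧸ V`
  set g : M →ₗ[A] ((K ⊗[A] M) ⧸ (V.restrictScalars A)) := (V.restrictScalars A).mkQ ∘ₗ fmk
    with hgdef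
  have hker : LinearMap.ker g = N := by
    rw [hgdef, LinearMap.ker_comp, Submodule.ker_mkQ, hNdef]
  have hle : N ≤ LinearMap.ker g := le_of_eq hker.symm
  set gbar : (M ⧸ N) →ₗ[A] ((K ⊗[A] M) ⧸ (V.restrictScalars A)) := N.liftQ g hle with hgbardef
  have hgbarinj : Function.Injective gbar := by
    rw [← LinearMap.ker_eq_bot]
    exact Submodule.ker_liftQ_eq_bot N g hle (le_of_eq hker)
  set e1 : ((K ⊗[A] M) ⧸ (V.restrictScalars A)) ≃ₗ[A] ((K ⊗[A] M) ⧸ V) :=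
    Submodule.Quotient.restrictScalarsEquiv A V with he1def
  set nq : ℕ := Module.finrank K ((K ⊗[A] M) ⧸ V) with hnqdef
  set e2 : ((K ⊗[A] M) ⧸ V) ≃ₗ[K] (Fin nq → K) := (Module.finBasis K _).equivFun with he2def
  set f1 : (M ⧸ N) →ₗ[A] (Fin nq → K) :=
    (e2.restrictScalars A).toLinearMap ∘ₗ e1.toLinearMap ∘ₗ gbar with hf1def
  have hf1 : Function.Injective f1 := by
    rw [hf1def]
    simp only [LinearMap.coe_comp, LinearEquiv.coe_coe]
    exact ((e2.restrictScalars A).injective.comp e1.injective).comp hgbarinj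
  haveI hQfree : Module.Free A (M ⧸ N) := free_of_inj_piK A nq f1 hf1
  -- the splitting
  obtain ⟨sec, hsec⟩ := Module.projective_lifting_property N.mkQ LinearMap.id
    (Submodule.mkQ_surjective N)
  set pr1 : M →ₗ[A] M := LinearMap.id - sec ∘ₗ N.mkQ with hpr1def
  have hπmem : ∀ x, pr1 x ∈ N := by
    intro x
    have h1 : N.mkQ (sec (N.mkQ x)) = N.mkQ x := LinearMap.congr_fun hsec (N.mkQ x)
    have h2 : N.mkQ (pr1 x) = 0 := by
      rw [hpr1def]
      simp only [LinearMap.sub_apply, LinearMap.id_apply, LinearMap.comp_apply, map_sub]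
      rw [h1, sub_self]
    rwa [Submodule.mkQ_apply, Submodule.Quotient.mk_eq_zero] at h2
  set Fp : M →ₗ[A] N := LinearMap.codRestrict N pr1 hπmem with hFpdef
  have hFproj : ∀ x : N, Fp (x : M) = x := by
    intro x
    apply Subtype.ext
    show pr1 (x : M) = (x : M)
    rw [hpr1def]
    simp only [LinearMap.sub_apply, LinearMap.id_apply, LinearMap.comp_apply]
    have h0 : N.mkQ (x : M) = 0 := by
      rw [Submodule.mkQ_apply, Submodule.Quotient.mk_eq_zero]
      exact x.2
    rw [h0, map_zero, sub_zero]
  have hcompl : IsCompl N (LinearMap.ker Fp) := LinearMap.isCompl_of_proj hFproj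
  haveI hNfin : Module.Finite A N :=
    Module.Finite.equiv (Submodule.quotientEquivOfIsCompl (LinearMap.ker Fp) N hcompl.symm)
  -- freeness of `N`
  set bM : Module.Basis (Fin (Fintype.card (Module.Free.ChooseBasisIndex A M))) A M :=
    (Module.Free.chooseBasis A M).reindex (Fintype.equivFin _) with hbMdef
  set fN : N →ₗ[A] (Fin (Fintype.card (Module.Free.ChooseBasisIndex A M)) → A) :=
    bM.equivFun.toLinearMap ∘ₗ N.subtype with hfNdef
  have hfNinj : Function.Injective fN := by
    rw [hfNdef]
    simp only [LinearMap.coe_comp, LinearEquiv.coe_coe]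
    exact bM.equivFun.injective.comp N.injective_subtype
  haveI hNfree : Module.Free A N := free_of_inj_pi _ fN hfNinj
  -- rank computation
  haveI : Module.Flat A K := IsLocalization.flat K (nonZeroDivisors A)
  set j : (K ⊗[A] N) →ₗ[K] K ⊗[A] M := LinearMap.baseChange K N.subtype with hjdef
  have hjinj : Function.Injective j := by
    have h1 := Module.Flat.lTensor_preserves_injective_linearMap (M := K) N.subtype
      N.injective_subtype
    rw [hjdef]
    show Function.Injective ⇑(LinearMap.baseChange K N.subtype)
    rw [LinearMap.baseChange_eq_ltensor]
    exact h1
  have hrange : LinearMap.range j = V := by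
    apply le_antisymm
    · rintro x ⟨y, rfl⟩
      induction y using TensorProduct.induction_on with
      | zero => simp
      | tmul k n =>
        have h1 : j (k ⊗ₜ[A] n) = k • ((1:K) ⊗ₜ[A] (n : M)) := by
          rw [hjdef, LinearMap.baseChange_tmul, TensorProduct.smul_tmul', smul_eq_mul, mul_one,
            Submodule.subtype_apply]
        rw [h1]
        refine Submodule.smul_mem _ _ ?_
        exact n.2
      | add a b ha hb =>
        rw [map_add]
        exact Submodule.add_mem _ ha hb
    · intro x hx
      obtain ⟨a, ha, m, hm⟩ := exists_denominator A x
      have haK : ((a : K)) ≠ 0 := by simpa using ha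
      have hax : a • x = ((a : K)) • x := (algebraMap_smul K a x).symm
      have hmV : fmk m ∈ V := by
        rw [hfmkdef]
        show TensorProduct.mk A K M 1 m ∈ V
        rw [hm, hax]
        exact Submodule.smul_mem _ _ hx
      have hmN : m ∈ N := by rw [hNdef]; exact hmV
      have hx2 : x = ((a : K))⁻¹ • (fmk m) := by
        rw [hfmkdef]
        show x = ((a : K))⁻¹ • (TensorProduct.mk A K M 1 m)
        rw [hm, hax, smul_smul, inv_mul_cancel₀ haK, one_smul]
      rw [hx2]
      refine Submodule.smul_mem _ _ ⟨(1:K) ⊗ₜ[A] (⟨m, hmN⟩ : N), ?_⟩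
      rw [hjdef, LinearMap.baseChange_tmul]
      rfl
  set eV : (K ⊗[A] N) ≃ₗ[K] V :=
    (LinearEquiv.ofInjective j hjinj).trans (LinearEquiv.ofEq _ _ hrange) with heVdef
  have h1 : Module.finrank A N = Fintype.card (Module.Free.ChooseBasisIndex A N) :=
    Module.finrank_eq_card_chooseBasisIndex A N
  have h2 : Module.finrank K (K ⊗[A] N) = Fintype.card (Module.Free.ChooseBasisIndex A N) :=
    Module.finrank_eq_card_basis ((Module.Free.chooseBasis A N).baseChange K)
  have h3 : Module.finrank K V = Fintype.card (Module.Free.ChooseBasisIndex A N) := by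
    rw [← h2]
    exact (LinearEquiv.finrank_eq eV).symm
  have h4 : Module.finrank K V = ∑ τ ∈ I, Module.finrank K (W τ) :=
    finrank_biSup_of_independent W hdec.submodule_iSupIndep I
  exact ⟨⟨LinearMap.ker Fp, hcompl⟩, hNfree, by rw [h1, ← h3, h4]⟩
end

section
/- Let M be a finitely generated free O_K-module equipped with a ℤ_p-algebra homomorphism ι : O_F → End_{O_K}(M). For a subset I of the set of ℚ_p-algebra embeddings of F into K, set M_I := M ∩ (⊕_{τ∈I} M_{K,τ}) and ρ_I := ∏_{τ∈I} τ(π) ∈ O_K. Then ρ_I · M_I ⊆ ι(π)(M). -/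
/-!
STATEMENT 1 (Lemma 3.5, final statement): with `M_I = M ∩ ⊕_{τ ∈ I} M_{K,τ}` and
`ρ_I = ∏_{τ ∈ I} τ(π) ∈ O_K`, we have `ρ_I • M_I ⊆ ι(π)(M)`.
-/

open scoped TensorProduct

open Polynomial in
/-- Auxiliary: if `∏_{τ ∈ s} (T - c τ • 1)` kills `x`, then `(∏ c τ) • x ∈ T(M)`. -/
theorem aux_prod_shift {A : Type*} [CommRing A] {M : Type*} [AddCommGroup M] [Module A M]
    (T : Module.End A M) {σ : Type*} [DecidableEq σ] (c : σ → A) (s : Finset σ) :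
    ∀ x : M, (Polynomial.aeval T (∏ τ ∈ s, (X - C (c τ)))) x = 0 →
      ∃ y : M, (∏ τ ∈ s, c τ) • x = T y := by
  classical
  induction s using Finset.induction_on with
  | empty =>
      intro x hx
      simp only [Finset.prod_empty, map_one, Module.End.one_apply] at hx
      exact ⟨0, by simp [hx]⟩
  | insert a s' ha ih =>
      intro x hx
      rw [Finset.prod_insert ha, mul_comm, map_mul, Module.End.mul_apply] at hx
      have hXC : (Polynomial.aeval T (X - C (c a))) x = T x - c a • x := by
        simp [map_sub, Module.algebraMap_end_apply]
      rw [hXC] at hx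
      obtain ⟨y', hy'⟩ := ih _ hx
      refine ⟨(∏ τ ∈ s', c τ) • x - y', ?_⟩
      rw [Finset.prod_insert ha, map_sub, map_smul, ← hy']
      simp only [smul_sub, mul_smul]
      rw [smul_comm (∏ τ ∈ s', c τ) (c a) x]
      abel

/-- Auxiliary: for a flat module over a valuation subring, `x ↦ 1 ⊗ x` is injective. -/
theorem aux_mk_injective {K : Type*} [Field K] (A : ValuationSubring K)
    {M : Type*} [AddCommGroup M] [Module A M] [Module.Flat A M] :
    Function.Injective (TensorProduct.mk A K M 1) := by
  have h1 : Function.Injective ((Algebra.linearMap A K).rTensor M) :=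
    Module.Flat.rTensor_preserves_injective_linearMap _ (IsFractionRing.injective A K)
  have h2 : Function.Injective ((TensorProduct.lid A M).symm : M →ₗ[A] A ⊗[A] M) :=
    (TensorProduct.lid A M).symm.injective
  have key : ∀ m : M, (TensorProduct.mk A K M 1) m
      = ((Algebra.linearMap A K).rTensor M) ((TensorProduct.lid A M).symm m) := by
    intro m
    simp [TensorProduct.lid_symm_apply]
  intro m m' h
  rw [key, key] at h
  exact h2 (h1 h)

theorem statement1
    -- the complete rank-one valued field `(K, v)` extending `ℚ_p`, with valuation ring `O_K = A`
    {p : ℕ} [Fact p.Prime] {K : Type*} [Field K] [Algebra ℚ_[p] K]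
    (v : K → ℝ)
    (hv_mul : ∀ x y : K, x ≠ 0 → y ≠ 0 → v (x * y) = v x + v y)
    (hv_add : ∀ x y : K, x ≠ 0 → y ≠ 0 → x + y ≠ 0 → min (v x) (v y) ≤ v (x + y))
    (hv_p : v (p : K) = 1)
    (A : ValuationSubring K)
    (hA : ∀ x : K, x ≠ 0 → (x ∈ A ↔ 0 ≤ v x))
    -- the finite extension `F` of `ℚ_p`, its ring of integers `O_F`, uniformiser `π`,
    -- ramification index `e`; `K` contains a Galois closure of `F|ℚ_p`
    {F : Type*} [Field F] [Algebra ℚ_[p] F] [FiniteDimensional ℚ_[p] F]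
    [Fintype (F →ₐ[ℚ_[p]] K)] [DecidableEq (F →ₐ[ℚ_[p]] K)]
    (OF : Subring F) (π : OF) (e : ℕ) (he : 0 < e)
    (hπe : ∃ u : OFˣ, (π : F) ^ e = (p : F) * ((u : OF) : F))
    (hτO : ∀ (τ : F →ₐ[ℚ_[p]] K) (x : OF), τ (x : F) ∈ A)
    (hτπ : ∀ τ : F →ₐ[ℚ_[p]] K, v (τ (π : F)) = 1 / e)
    -- the finitely generated free `O_K`-module `M` with `O_F`-action `ι`,
    -- and the eigenspace decomposition `M_K = ⊕_τ M_{K,τ}`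
    {M : Type*} [AddCommGroup M] [Module A M] [Module.Free A M] [Module.Finite A M]
    (ι : OF →+* Module.End A M)
    (hdec : DirectSum.IsInternal (fun τ : F →ₐ[ℚ_[p]] K => eigenspaceOF A OF ι τ))
    (I : Finset (F →ₐ[ℚ_[p]] K)) :
    -- `ρ_I • M_I ⊆ ι(π)(M)`, where `ρ_I = ∏_{τ ∈ I} τ(π) ∈ O_K`
    ∀ x ∈ integralPartOF A OF ι I,
      ∃ y : M, (∏ τ ∈ I, (⟨τ (π : F), hτO τ π⟩ : A)) • x = ι π y := by
  classical
  intro x hx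
  set c : (F →ₐ[ℚ_[p]] K) → A := fun τ => (⟨τ (π : F), hτO τ π⟩ : A) with hc
  set f : Polynomial A := ∏ τ ∈ I, (Polynomial.X - Polynomial.C (c τ)) with hf
  -- Step 1: the base-changed operator `aeval ((ι π).baseChange K) f` kills `⨆ τ ∈ I, M_{K,τ}`
  have hle : (⨆ τ ∈ I, eigenspaceOF A OF ι τ : Submodule K (K ⊗[A] M)) ≤
      LinearMap.ker (Polynomial.aeval ((ι π).baseChange K) f :
        Module.End K (K ⊗[A] M)) := by
    refine iSup_le fun τ => iSup_le fun hτ => fun w hw => ?_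
    have hfac : f = (∏ σ ∈ I.erase τ, (Polynomial.X - Polynomial.C (c σ)))
        * (Polynomial.X - Polynomial.C (c τ)) := by
      rw [hf, Finset.prod_erase_mul I _ hτ]
    rw [LinearMap.mem_ker, hfac, map_mul, Module.End.mul_apply]
    have h0 : (Polynomial.aeval ((ι π).baseChange K)
        (Polynomial.X - Polynomial.C (c τ))) w = 0 := by
      rw [eigenspaceOF, Submodule.mem_iInf] at hw
      have hπw := hw π
      rw [LinearMap.mem_ker, LinearMap.sub_apply, LinearMap.smul_apply,
        LinearMap.id_apply, sub_eq_zero] at hπw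
      rw [map_sub, Polynomial.aeval_X, Polynomial.aeval_C, LinearMap.sub_apply,
        Module.algebraMap_end_apply, hπw, sub_eq_zero]
      rw [← algebraMap_smul K (c τ) w]
      rfl
    rw [h0, map_zero]
  -- Step 2: hence `aeval (ι π) f` kills `x`, by injectivity of `x ↦ 1 ⊗ x`
  have hx' : (TensorProduct.mk A K M 1) x ∈
      (⨆ τ ∈ I, eigenspaceOF A OF ι τ : Submodule K (K ⊗[A] M)) := hx
  have hker := hle hx'
  rw [LinearMap.mem_ker] at hker
  have hBC : (Polynomial.aeval ((ι π).baseChange K) f) ((TensorProduct.mk A K M 1) x)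
      = (TensorProduct.mk A K M 1) ((Polynomial.aeval (ι π) f) x) := by
    have h1 : (Polynomial.aeval ((ι π).baseChange K) f : Module.End K (K ⊗[A] M))
        = ((Polynomial.aeval (ι π) f : Module.End A M).baseChange K) := by
      have h2 : ((ι π).baseChange K : Module.End K (K ⊗[A] M))
          = Module.End.baseChangeHom A K M (ι π) := rfl
      rw [h2, Polynomial.aeval_algHom_apply]
      rfl
    rw [h1]
    simp [TensorProduct.mk_apply, LinearMap.baseChange_tmul]
  rw [hBC] at hker
  have hP : (Polynomial.aeval (ι π) f) x = 0 := by
    apply aux_mk_injective A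
    rw [hker, map_zero]
  -- Step 3: conclude by the shifting lemma
  exact aux_prod_shift (ι π) c I x hP
end

section
/- Let M be a finitely generated free O_K-module equipped with a ℤ_p-algebra homomorphism ι : O_F → End_{O_K}(M), and for a subset I of the set of ℚ_p-algebra embeddings of F into K set M_I := M ∩ (⊕_{τ∈I} M_{K,τ}) and ρ_I := ∏_{τ∈I} τ(π) ∈ O_K. Then: (a) the endomorphism ι(π) of M is injective; (b) ι(π)(M) ∩ M_I = ι(π)(M_I); (c) consequently ρ_I · M_I ⊆ ι(π)(M_I), i.e. the quotient module M_I/ι(π)(M_I) is annihilated by ρ_I. -/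
/-!
STATEMENT 2 (used in the proof of Theorem 4.8): (a) `ι(π)` is injective on `M`;
(b) `ι(π)(M) ∩ M_I = ι(π)(M_I)`; (c) consequently `ρ_I • M_I ⊆ ι(π)(M_I)`, i.e. the quotient
`M_I / ι(π)(M_I)` is annihilated by `ρ_I = ∏_{τ ∈ I} τ(π)`.
-/

open Polynomial in
lemma auxPolyFactor {R ι : Type*} [CommRing R] (s : Finset ι) (c : ι → R) :
    ∃ g : R[X], ∏ τ ∈ s, (C (c τ) - X) = C (∏ τ ∈ s, c τ) + g * X := by
  have hdvd : (X : R[X]) ∣ (∏ τ ∈ s, (C (c τ) - X)) - C (∏ τ ∈ s, c τ) := by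
    rw [X_dvd_iff]
    simp [coeff_zero_eq_eval_zero, eval_prod]
  obtain ⟨g, hg⟩ := hdvd
  refine ⟨g, ?_⟩
  have : (∏ τ ∈ s, (C (c τ) - X)) = C (∏ τ ∈ s, c τ) + X * g := by
    rw [← hg]; ring
  rw [this]; ring

lemma auxDisjointBiSup {ι R N : Type*} [DecidableEq ι] [Ring R] [AddCommGroup N] [Module R N]
    {p : ι → Submodule R N} (h : iSupIndep p) (s t : ι → Prop) [DecidablePred s] [DecidablePred t]
    (hst : ∀ i, s i → t i → False) :
    Disjoint (⨆ (i) (_ : s i), p i) (⨆ (i) (_ : t i), p i) := by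
  rw [Submodule.disjoint_def]
  intro z hzs hzt
  obtain ⟨f, hf⟩ := (Submodule.mem_biSup_iff_exists_dfinsupp s p z).mp hzs
  obtain ⟨g, hg⟩ := (Submodule.mem_biSup_iff_exists_dfinsupp t p z).mp hzt
  have h2 := h.dfinsupp_lsum_injective (hf.trans hg.symm)
  have h3 : (f.filter s) = 0 := by
    ext i
    have hfi := DFunLike.congr_fun h2 i
    by_cases hsi : s i
    · by_cases hti : t i
      · exact (hst i hsi hti).elim
      · simp only [DFinsupp.filter_apply, hsi, hti, if_true, if_false] at hfi ⊢
        simp [hfi]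
    · simp [DFinsupp.filter_apply, hsi]
  rw [h3, map_zero] at hf
  exact hf.symm

open scoped TensorProduct

set_option maxHeartbeats 1000000 in
set_option synthInstance.maxHeartbeats 400000 in
theorem statement2
    -- the complete rank-one valued field `(K, v)` extending `ℚ_p`, with valuation ring `O_K = A`
    {p : ℕ} [Fact p.Prime] {K : Type*} [Field K] [Algebra ℚ_[p] K]
    (v : K → ℝ)
    (hv_mul : ∀ x y : K, x ≠ 0 → y ≠ 0 → v (x * y) = v x + v y)
    (hv_add : ∀ x y : K, x ≠ 0 → y ≠ 0 → x + y ≠ 0 → min (v x) (v y) ≤ v (x + y))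
    (hv_p : v (p : K) = 1)
    (A : ValuationSubring K)
    (hA : ∀ x : K, x ≠ 0 → (x ∈ A ↔ 0 ≤ v x))
    -- the finite extension `F` of `ℚ_p`, its ring of integers `O_F`, uniformiser `π`,
    -- ramification index `e`; `K` contains a Galois closure of `F|ℚ_p`
    {F : Type*} [Field F] [Algebra ℚ_[p] F] [FiniteDimensional ℚ_[p] F]
    [Fintype (F →ₐ[ℚ_[p]] K)] [DecidableEq (F →ₐ[ℚ_[p]] K)]
    (OF : Subring F) (π : OF) (e : ℕ) (he : 0 < e)
    (hπe : ∃ u : OFˣ, (π : F) ^ e = (p : F) * ((u : OF) : F))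
    (hτO : ∀ (τ : F →ₐ[ℚ_[p]] K) (x : OF), τ (x : F) ∈ A)
    (hτπ : ∀ τ : F →ₐ[ℚ_[p]] K, v (τ (π : F)) = 1 / e)
    -- the finitely generated free `O_K`-module `M` with `O_F`-action `ι`,
    -- and the eigenspace decomposition `M_K = ⊕_τ M_{K,τ}`
    {M : Type*} [AddCommGroup M] [Module A M] [Module.Free A M] [Module.Finite A M]
    (ι : OF →+* Module.End A M)
    (hdec : DirectSum.IsInternal (fun τ : F →ₐ[ℚ_[p]] K => eigenspaceOF A OF ι τ))
    (I : Finset (F →ₐ[ℚ_[p]] K)) :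
    -- (a) `ι(π)` is injective
    Function.Injective (ι π) ∧
    -- (b) `ι(π)(M) ∩ M_I = ι(π)(M_I)`
    LinearMap.range (ι π) ⊓ integralPartOF A OF ι I
      = Submodule.map (ι π) (integralPartOF A OF ι I) ∧
    -- (c) `ρ_I • M_I ⊆ ι(π)(M_I)`, i.e. `M_I / ι(π)(M_I)` is annihilated by `ρ_I`
    ∀ x ∈ integralPartOF A OF ι I,
      ∃ y ∈ integralPartOF A OF ι I,
        (∏ τ ∈ I, (⟨τ (π : F), hτO τ π⟩ : A)) • x = ι π y := by
  classical
  set E : (F →ₐ[ℚ_[p]] K) → Submodule K (K ⊗[A] M) := fun τ => eigenspaceOF A OF ι τ with hE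
  set fK : Module.End K (K ⊗[A] M) := LinearMap.baseChange K (ι π) with hfK
  set j : M →ₗ[A] K ⊗[A] M := TensorProduct.mk A K M 1 with hjdef
  -- membership in the integral part
  have hmem : ∀ x : M, x ∈ integralPartOF A OF ι I ↔ j x ∈ ⨆ τ ∈ I, E τ := fun x => Iff.rfl
  -- π is nonzero
  have hFchar : CharZero F := charZero_of_injective_algebraMap (algebraMap ℚ_[p] F).injective
  have hπF : (π : F) ≠ 0 := by
    obtain ⟨u, hu⟩ := hπe
    intro h0
    have hp : (p : F) ≠ 0 := Nat.cast_ne_zero.2 (Fact.out (p := p.Prime)).pos.ne'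
    have hu0 : ((u : OF) : F) ≠ 0 := by
      simpa using u.ne_zero
    have : ((π : F)) ^ e ≠ 0 := hu ▸ mul_ne_zero hp hu0
    exact this (by rw [h0, zero_pow he.ne'])
  have h_ne : ∀ τ : F →ₐ[ℚ_[p]] K, τ (π : F) ≠ 0 := by
    intro τ h0
    exact hπF (τ.toRingHom.injective (by simpa using h0))
  -- eigen-equation
  have h_eig : ∀ (τ : F →ₐ[ℚ_[p]] K) (a : OF), ∀ w ∈ E τ,
      LinearMap.baseChange K (ι a) w = τ (a : F) • w := by
    intro τ a w hw
    have h1 : w ∈ LinearMap.ker ((ι a).baseChange K - τ (a : F) • LinearMap.id) :=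
      (Submodule.mem_iInf _).mp hw a
    have h2 := LinearMap.mem_ker.mp h1
    rw [LinearMap.sub_apply, LinearMap.smul_apply, LinearMap.id_apply, sub_eq_zero] at h2
    exact h2
  have hfKeig : ∀ (τ : F →ₐ[ℚ_[p]] K), ∀ w ∈ E τ, fK w = τ (π : F) • w :=
    fun τ w hw => h_eig τ π w hw
  -- fK preserves the partial sups
  have hS_map : ∀ (s : Finset (F →ₐ[ℚ_[p]] K)), ∀ w ∈ (⨆ τ ∈ s, E τ), fK w ∈ ⨆ τ ∈ s, E τ := by
    intro s
    have : (⨆ τ ∈ s, E τ) ≤ Submodule.comap fK (⨆ τ ∈ s, E τ) := by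
      refine iSup₂_le fun τ hτ w hw => ?_
      rw [Submodule.mem_comap, hfKeig τ w hw]
      exact Submodule.smul_mem _ _ (le_iSup₂ (f := fun τ _ => E τ) τ hτ hw)
    exact fun w hw => this hw
  -- the product polynomial kills the partial sup
  have hP : ∀ (s : Finset (F →ₐ[ℚ_[p]] K)), ∀ w ∈ (⨆ τ ∈ s, E τ),
      (Polynomial.aeval fK (∏ τ ∈ s, (Polynomial.C (τ (π : F)) - Polynomial.X))) w = 0 := by
    intro s
    have : (⨆ τ ∈ s, E τ) ≤ LinearMap.ker
        (Polynomial.aeval fK (∏ τ ∈ s, (Polynomial.C (τ (π : F)) - Polynomial.X))) := by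
      refine iSup₂_le fun τ hτ w hw => ?_
      rw [LinearMap.mem_ker, ← Finset.prod_erase_mul s _ hτ, map_mul, Module.End.mul_apply]
      have h0 : (Polynomial.aeval fK (Polynomial.C (τ (π : F)) - Polynomial.X)) w = 0 := by
        rw [map_sub, Polynomial.aeval_C, Polynomial.aeval_X, LinearMap.sub_apply,
          Module.algebraMap_end_apply, hfKeig τ w hw, sub_self]
      rw [h0, map_zero]
    exact fun w hw => this hw
  -- kernel lemma on partial sups
  have hKL : ∀ (s : Finset (F →ₐ[ℚ_[p]] K)), ∀ w ∈ (⨆ τ ∈ s, E τ), fK w = 0 → w = 0 := by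
    intro s w hw hw0
    obtain ⟨g, hg⟩ := auxPolyFactor s (fun τ : F →ₐ[ℚ_[p]] K => τ (π : F))
    have h1 := hP s w hw
    rw [hg, map_add, LinearMap.add_apply, Polynomial.aeval_C, map_mul, Module.End.mul_apply,
      Polynomial.aeval_X, hw0, map_zero, add_zero, Module.algebraMap_end_apply] at h1
    have hρ : (∏ τ ∈ s, τ (π : F)) ≠ 0 := Finset.prod_ne_zero_iff.mpr fun τ _ => h_ne τ
    exact (smul_eq_zero.mp h1).resolve_left hρ
  -- everything lies in the full sup
  have h_top : ∀ w : K ⊗[A] M, w ∈ ⨆ τ ∈ (Finset.univ : Finset (F →ₐ[ℚ_[p]] K)), E τ := by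
    intro w
    have h1 : (⨆ τ, E τ) = ⊤ := hdec.submodule_iSup_eq_top
    have h2 : (⨆ τ ∈ (Finset.univ : Finset (F →ₐ[ℚ_[p]] K)), E τ) = ⨆ τ, E τ := by
      simp
    rw [h2, h1]
    trivial
  have hfK_inj : ∀ w, fK w = 0 → w = 0 := fun w hw => hKL Finset.univ w (h_top w) hw
  -- j is injective
  have hj : Function.Injective j := by
    have halg : Function.Injective (Algebra.linearMap A K) := by
      intro a b hab
      exact Subtype.coe_injective (by simpa using hab)
    have h1 : Function.Injective ((Algebra.linearMap A K).rTensor M) :=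
      Module.Flat.rTensor_preserves_injective_linearMap _ halg
    have key : ∀ x : M, j x = ((Algebra.linearMap A K).rTensor M) ((1 : A) ⊗ₜ[A] x) := by
      intro x
      simp [hjdef]
    intro x y hxy
    have h2 : ((1 : A) ⊗ₜ[A] x : A ⊗[A] M) = (1 : A) ⊗ₜ[A] y := h1 (by rw [← key, ← key, hxy])
    have h3 := congrArg (TensorProduct.lid A M) h2
    simpa using h3
  -- compatibility of j with base change
  have h_comm : ∀ (g : Module.End A M) (x : M), j (g x) = (LinearMap.baseChange K g) (j x) := by
    intro g x
    simp [hjdef]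
  -- (a)
  have ha : Function.Injective (ι π) := by
    rw [← LinearMap.ker_eq_bot (f := ι π), Submodule.eq_bot_iff]
    intro x hx
    have h0 : fK (j x) = 0 := by
      rw [← h_comm, LinearMap.mem_ker.mp hx, map_zero]
    have h1 : j x = 0 := hfK_inj _ h0
    apply hj
    rw [h1, map_zero]
  -- (b)
  have hb : LinearMap.range (ι π) ⊓ integralPartOF A OF ι I
      = Submodule.map (ι π) (integralPartOF A OF ι I) := by
    apply le_antisymm
    · rintro m ⟨⟨m₀, rfl⟩, hmI⟩
      refine ⟨m₀, ?_, rfl⟩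
      refine (hmem m₀).mpr ?_
      -- decompose j m₀
      have hw : j m₀ ∈ (⨆ τ ∈ I, E τ) ⊔ (⨆ τ ∈ Iᶜ, E τ) := by
        have hle : (⨆ τ, E τ) ≤ (⨆ τ ∈ I, E τ) ⊔ (⨆ τ ∈ Iᶜ, E τ) := by
          refine iSup_le fun τ => ?_
          by_cases hτ : τ ∈ I
          · exact le_sup_of_le_left (le_iSup₂ (f := fun τ _ => E τ) τ hτ)
          · exact le_sup_of_le_right (le_iSup₂ (f := fun τ _ => E τ) τ (Finset.mem_compl.mpr hτ))
        exact hle (by rw [hdec.submodule_iSup_eq_top]; trivial)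
      obtain ⟨u, hu, u', hu', huw⟩ := Submodule.mem_sup.mp hw
      have h1 : fK u' ∈ (⨆ τ ∈ I, E τ) := by
        have hA1 : fK (j m₀) ∈ (⨆ τ ∈ I, E τ) := by
          rw [← h_comm]
          exact (hmem _).mp hmI
        have hA2 : fK u ∈ (⨆ τ ∈ I, E τ) := hS_map I u hu
        have : fK u' = fK (j m₀) - fK u := by
          rw [← huw, map_add]; abel
        rw [this]
        exact Submodule.sub_mem _ hA1 hA2
      have h2 : fK u' ∈ (⨆ τ ∈ Iᶜ, E τ) := hS_map Iᶜ u' hu'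
      have hdisj : Disjoint (⨆ τ ∈ I, E τ) (⨆ τ ∈ Iᶜ, E τ) :=
        auxDisjointBiSup hdec.submodule_iSupIndep (· ∈ I) (· ∈ Iᶜ)
          (fun τ hI hIc => (Finset.mem_compl.mp hIc) hI)
      have h3 : fK u' = 0 := (Submodule.disjoint_def.mp hdisj) _ h1 h2
      have h4 : u' = 0 := hKL Iᶜ u' hu' h3
      rw [← huw, h4, add_zero]
      exact hu
    · rintro m ⟨y, hy, rfl⟩
      refine ⟨⟨y, rfl⟩, ?_⟩
      refine (hmem _).mpr ?_
      rw [h_comm]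
      exact hS_map I _ ((hmem y).mp hy)
  refine ⟨ha, hb, ?_⟩
  -- (c)
  intro x hx
  set ρ : A := ∏ τ ∈ I, (⟨τ (π : F), hτO τ π⟩ : A) with hρdef
  set qA : Polynomial A :=
    ∏ τ ∈ I, (Polynomial.C (⟨τ (π : F), hτO τ π⟩ : A) - Polynomial.X) with hqA
  have step1 : (Polynomial.aeval (ι π) qA) x = 0 := by
    apply hj
    rw [map_zero, h_comm]
    have hΦ : LinearMap.baseChange K (Polynomial.aeval (ι π) qA)
        = Polynomial.aeval fK (qA.map (algebraMap A K)) := by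
      have h1 : LinearMap.baseChange K ((Polynomial.aeval (ι π)) qA)
          = Module.End.baseChangeHom A K M ((Polynomial.aeval (ι π)) qA) := rfl
      rw [h1, ← Polynomial.aeval_algHom_apply, Polynomial.aeval_map_algebraMap]
      rfl
    rw [hΦ]
    have hqK : qA.map (algebraMap A K)
        = ∏ τ ∈ I, (Polynomial.C (τ (π : F)) - Polynomial.X) := by
      rw [hqA, Polynomial.map_prod]
      refine Finset.prod_congr rfl fun τ _ => ?_
      rw [Polynomial.map_sub, Polynomial.map_C, Polynomial.map_X]
      rfl
    rw [hqK]
    exact hP I _ ((hmem x).mp hx)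
  obtain ⟨g, hg⟩ := auxPolyFactor I (fun τ : F →ₐ[ℚ_[p]] K => (⟨τ (π : F), hτO τ π⟩ : A))
  have h3 : (Polynomial.aeval (ι π)) qA
      = algebraMap A (Module.End A M) ρ + (Polynomial.aeval (ι π) g) * (ι π) := by
    rw [hqA, hg, map_add, Polynomial.aeval_C, map_mul, Polynomial.aeval_X, hρdef]
  have h4 : ρ • x + (Polynomial.aeval (ι π) g) ((ι π) x) = 0 := by
    have h5 := step1
    rw [h3, LinearMap.add_apply, Module.End.mul_apply, Module.algebraMap_end_apply] at h5
    exact h5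
  have hcomm : (Polynomial.aeval (ι π) g) ((ι π) x) = (ι π) ((Polynomial.aeval (ι π) g) x) := by
    have ha1 := map_mul (Polynomial.aeval (ι π)) g Polynomial.X
    have ha2 := map_mul (Polynomial.aeval (ι π)) Polynomial.X g
    rw [Polynomial.aeval_X] at ha1 ha2
    have : (Polynomial.aeval (ι π) g) * (ι π) = (ι π) * (Polynomial.aeval (ι π) g) := by
      rw [← ha1, ← ha2, mul_comm]
    calc (Polynomial.aeval (ι π) g) ((ι π) x)
        = ((Polynomial.aeval (ι π) g) * (ι π)) x := rfl
      _ = ((ι π) * (Polynomial.aeval (ι π) g)) x := by rw [this]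
      _ = (ι π) ((Polynomial.aeval (ι π) g) x) := rfl
  have h6 : ρ • x = (ι π) (-(Polynomial.aeval (ι π) g) x) := by
    have h7 : ρ • x = -((Polynomial.aeval (ι π) g) ((ι π) x)) :=
      eq_neg_of_add_eq_zero_left h4
    rw [h7, hcomm, ← map_neg]
  have h8 : ρ • x ∈ LinearMap.range (ι π) ⊓ integralPartOF A OF ι I := by
    refine ⟨⟨-(Polynomial.aeval (ι π) g) x, h6.symm⟩, ?_⟩
    exact Submodule.smul_mem _ _ hx
  rw [hb] at h8
  obtain ⟨y, hy, hyy⟩ := h8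
  exact ⟨y, hy, hyy.symm⟩
end

section
/- Let M → M' be a surjective homomorphism of finitely presented torsion O_K-modules, and suppose given isomorphisms M ≅ ⊕_{j=1}^{m} O_K/a_jO_K and M' ≅ ⊕_{j=1}^{m'} O_K/b_jO_K for some m, m' ∈ ℕ and nonzero elements a_1, …, a_m, b_1, …, b_{m'} ∈ O_K with v(a_1) ≥ … ≥ v(a_m) and v(b_1) ≥ … ≥ v(b_{m'}). Then v(b_j) ≤ v(a_j) for all 1 ≤ j ≤ min{m, m'}, and if m' > m then v(b_j) = 0 (i.e. b_j is a unit of O_K) for all m < j ≤ m'. -/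
section Helpers

variable {K : Type*} [Field K] (v : K → ℝ) (A : ValuationSubring K)

lemma coe_ne_zero' {x : A} (h : x ≠ 0) : (x : K) ≠ 0 :=
  fun h0 => h (Subtype.ext h0)

lemma v_one_eq_zero (hv_mul : ∀ x y : K, x ≠ 0 → y ≠ 0 → v (x * y) = v x + v y) :
    v 1 = 0 := by
  have := hv_mul 1 1 one_ne_zero one_ne_zero
  simp only [one_mul] at this
  linarith

lemma v_nonneg' (hA : ∀ x : K, x ≠ 0 → (x ∈ A ↔ 0 ≤ v x)) (x : A) (hx : x ≠ 0) :
    0 ≤ v (x : K) :=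
  (hA x (coe_ne_zero' A hx)).mp x.2

lemma dvd_of_v_le (hv_mul : ∀ x y : K, x ≠ 0 → y ≠ 0 → v (x * y) = v x + v y)
    (hA : ∀ x : K, x ≠ 0 → (x ∈ A ↔ 0 ≤ v x))
    {x y : A} (hx : x ≠ 0) (hy : y ≠ 0) (h : v (y : K) ≤ v (x : K)) : y ∣ x := by
  have hxK : (x : K) ≠ 0 := coe_ne_zero' A hx
  have hyK : (y : K) ≠ 0 := coe_ne_zero' A hy
  set z : K := (x : K) * (y : K)⁻¹ with hz
  have hzne : z ≠ 0 := mul_ne_zero hxK (inv_ne_zero hyK)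
  have hzy : z * (y : K) = (x : K) := by rw [hz]; field_simp
  have hvz : v x = v z + v y := by rw [← hzy, hv_mul z y hzne hyK]
  have hzA : z ∈ A := (hA z hzne).mpr (by linarith)
  refine ⟨⟨z, hzA⟩, Subtype.ext ?_⟩
  push_cast
  rw [mul_comm, hzy]

lemma mem_max_of_v_pos (hv_mul : ∀ x y : K, x ≠ 0 → y ≠ 0 → v (x * y) = v x + v y)
    (hA : ∀ x : K, x ≠ 0 → (x ∈ A ↔ 0 ≤ v x))
    {x : A} (hpos : 0 < v (x : K)) : x ∈ IsLocalRing.maximalIdeal A := by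
  rw [IsLocalRing.mem_maximalIdeal, mem_nonunits_iff]
  rintro ⟨u, rfl⟩
  have h1 : ((u : A) : K) * (((u⁻¹ : Aˣ) : A) : K) = 1 := by
    have h : ((u : A) * ((u⁻¹ : Aˣ) : A) : A) = 1 := by
      rw [u.mul_inv]
    calc ((u : A) : K) * (((u⁻¹ : Aˣ) : A) : K) = (((u : A) * ((u⁻¹ : Aˣ) : A) : A) : K) := by
          push_cast; ring
      _ = 1 := by rw [h]; rfl
  have hun : ((u : A) : K) ≠ 0 := left_ne_zero_of_mul (h1 ▸ (one_ne_zero : (1:K) ≠ 0))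
  have hin : (((u⁻¹ : Aˣ) : A) : K) ≠ 0 := right_ne_zero_of_mul (h1 ▸ (one_ne_zero : (1:K) ≠ 0))
  have hvsum : v ((u : A) : K) + v (((u⁻¹ : Aˣ) : A) : K) = 0 := by
    rw [← hv_mul _ _ hun hin, h1, v_one_eq_zero v hv_mul]
  have hinv_nonneg : 0 ≤ v (((u⁻¹ : Aˣ) : A) : K) :=
    (hA _ hin).mp ((u⁻¹ : Aˣ) : A).2
  linarith

end Helpers

set_option maxHeartbeats 1000000 in
set_option synthInstance.maxHeartbeats 1000000 in
lemma aux_count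
    {K : Type*} [Field K] (v : K → ℝ)
    (hv_mul : ∀ x y : K, x ≠ 0 → y ≠ 0 → v (x * y) = v x + v y)
    (A : ValuationSubring K)
    (hA : ∀ x : K, x ≠ 0 → (x ∈ A ↔ 0 ≤ v x))
    {M M' : Type*} [AddCommGroup M] [Module A M] [AddCommGroup M'] [Module A M']
    (f : M →ₗ[A] M') (hf : Function.Surjective f)
    {m m' : ℕ} (a : Fin m → A) (b : Fin m' → A)
    (ha0 : ∀ j, a j ≠ 0) (hb0 : ∀ j, b j ≠ 0)
    (eM : M ≃ₗ[A] ((j : Fin m) → A ⧸ Ideal.span {a j}))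
    (eM' : M' ≃ₗ[A] ((j : Fin m') → A ⧸ Ideal.span {b j}))
    (c : A) (hc : c ≠ 0) (n : ℕ) (hn : n ≤ m')
    (hcb : ∀ i : Fin m', (i : ℕ) < n → v (c : K) < v ((b i : A) : K))
    (hcard : (Finset.univ.filter (fun i : Fin m => v (c : K) < v ((a i : A) : K))).card < n) :
    False := by
  classical
  let κ := IsLocalRing.ResidueField A
  let q : (Fin m → A) →ₗ[A] ((j : Fin m) → A ⧸ Ideal.span {a j}) :=
    LinearMap.pi fun j => (Ideal.span {a j}).mkQ.comp (LinearMap.proj j)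
  have hq : Function.Surjective q := by
    intro y
    choose t ht using fun j => Submodule.Quotient.mk_surjective (Ideal.span {a j}) (y j)
    exact ⟨t, funext ht⟩
  let φ : (Fin m → A) →ₗ[A] M' := f.comp (eM.symm.toLinearMap.comp q)
  have hφ : Function.Surjective φ := hf.comp (eM.symm.surjective.comp hq)
  let r : A →ₗ[A] κ := Algebra.linearMap A κ
  have hrx : ∀ x : A, r x = IsLocalRing.residue A x := fun x => by
    rw [Algebra.linearMap_apply, IsLocalRing.ResidueField.algebraMap_eq]
  have hbm : ∀ i : Fin m', (i : ℕ) < n → (b i) ∈ IsLocalRing.maximalIdeal A := fun i hi =>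
    mem_max_of_v_pos v A hv_mul hA (lt_of_le_of_lt (v_nonneg' v A hA c hc) (hcb i hi))
  let σ : (i : Fin m') → ((i : ℕ) < n) → ((A ⧸ Ideal.span {b i}) →ₗ[A] κ) := fun i hi =>
    Submodule.liftQ (Ideal.span {b i}) r (by
      rw [Ideal.span_le, Set.singleton_subset_iff]
      show (b i) ∈ LinearMap.ker r
      rw [LinearMap.mem_ker, hrx]
      exact Ideal.Quotient.eq_zero_iff_mem.mpr (hbm i hi))
  have hσmk : ∀ (i : Fin m') (hi : (i : ℕ) < n) (t : A),
      σ i hi (Submodule.Quotient.mk t) = r t := fun i hi t => rfl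
  let G : (Fin m → A) →ₗ[A] (Fin n → κ) :=
    (LinearMap.pi fun i : Fin n =>
      (σ (Fin.castLE hn i) i.isLt).comp
        ((LinearMap.proj (Fin.castLE hn i)).comp eM'.toLinearMap)).comp φ
  have hGapp : ∀ (x : Fin m → A) (i : Fin n),
      G x i = σ (Fin.castLE hn i) i.isLt ((eM' (φ x)) (Fin.castLE hn i)) := fun x i => rfl
  -- surjectivity of G
  have hGsurj : Function.Surjective G := by
    intro w
    choose T hT using fun i : Fin n => IsLocalRing.residue_surjective (R := A) (w i)
    set Y : (j : Fin m') → A ⧸ Ideal.span {b j} :=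
      fun j => if h : (j : ℕ) < n then Submodule.Quotient.mk (T ⟨j, h⟩) else 0 with hY
    obtain ⟨x, hx⟩ := hφ (eM'.symm Y)
    refine ⟨x, funext fun i => ?_⟩
    rw [hGapp x i, hx, eM'.apply_symm_apply]
    have h2 : Y (Fin.castLE hn i) = Submodule.Quotient.mk (T i) := by
      show (if h : (i : ℕ) < n then Submodule.Quotient.mk (T ⟨(i : ℕ), h⟩) else 0) = _
      rw [dif_pos i.isLt]
    rw [h2, hσmk _ i.isLt (T i), hrx]
    exact hT i
  -- vanishing of G on the standard basis vectors outside S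
  have hGzero : ∀ i : Fin m, ¬ (v (c : K) < v ((a i : A) : K)) →
      G ((Pi.single i 1 : Fin m → A)) = 0 := by
    intro i hi
    have hdvd : a i ∣ c := dvd_of_v_le v A hv_mul hA hc (ha0 i) (not_lt.1 hi)
    have hqz : q (c • (Pi.single i 1 : Fin m → A)) = 0 := by
      funext j
      show Submodule.Quotient.mk ((c • (Pi.single i 1 : Fin m → A)) j) = 0
      rw [Submodule.Quotient.mk_eq_zero]
      by_cases hji : j = i
      · subst hji
        simp only [Pi.smul_apply, Pi.single_eq_same, smul_eq_mul, mul_one]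
        exact Ideal.mem_span_singleton.mpr hdvd
      · simp only [Pi.smul_apply, Pi.single_eq_of_ne hji, smul_zero]
        exact Submodule.zero_mem _
    have hcφ : c • φ ((Pi.single i 1 : Fin m → A)) = 0 := by
      rw [← map_smul]
      show f (eM.symm (q (c • (Pi.single i 1 : Fin m → A)))) = 0
      rw [hqz, map_zero, map_zero]
    funext i₀
    set y := eM' (φ ((Pi.single i 1 : Fin m → A))) with hy'
    have hy : c • y = 0 := by rw [hy', ← map_smul, hcφ, map_zero]
    obtain ⟨t, ht⟩ := Submodule.Quotient.mk_surjective _ (y (Fin.castLE hn i₀))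
    have hct : c * t ∈ Ideal.span {b (Fin.castLE hn i₀)} := by
      have h3 : c • y (Fin.castLE hn i₀) = 0 := by
        rw [← Pi.smul_apply, hy]; rfl
      rw [← ht, ← Submodule.Quotient.mk_smul, smul_eq_mul] at h3
      exact (Submodule.Quotient.mk_eq_zero _).mp h3
    have htm : t ∈ IsLocalRing.maximalIdeal A := by
      by_cases ht0 : t = 0
      · rw [ht0]; exact Submodule.zero_mem _
      · obtain ⟨s, hs⟩ := Ideal.mem_span_singleton.mp hct
        have hs0 : s ≠ 0 := by
          rintro rfl
          rw [mul_zero] at hs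
          exact (mul_ne_zero hc ht0) hs
        apply mem_max_of_v_pos v A hv_mul hA
        have e1 : v ((c : K) * (t : K)) = v c + v t :=
          hv_mul _ _ (coe_ne_zero' A hc) (coe_ne_zero' A ht0)
        have e2 : v ((b (Fin.castLE hn i₀) : A) : K) + v ((s : A) : K)
            = v ((b (Fin.castLE hn i₀) : A) : K) * 1 + v s := by ring
        have e3 : v (((b (Fin.castLE hn i₀)) : K) * (s : K))
            = v ((b (Fin.castLE hn i₀) : A) : K) + v ((s : A) : K) :=
          hv_mul _ _ (coe_ne_zero' A (hb0 _)) (coe_ne_zero' A hs0)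
        have e4 : (c : K) * (t : K) = ((b (Fin.castLE hn i₀)) : K) * (s : K) := by
          have := congrArg (Subtype.val) hs
          push_cast at this ⊢
          exact this
        have e5 : 0 ≤ v ((s : A) : K) := v_nonneg' v A hA s hs0
        have e6 : v (c : K) < v ((b (Fin.castLE hn i₀) : A) : K) := hcb _ i₀.isLt
        rw [e4, e3] at e1
        linarith
    show G ((Pi.single i 1 : Fin m → A)) i₀ = 0
    rw [hGapp, ← hy', ← ht, hσmk _ i₀.isLt t, hrx]
    exact Ideal.Quotient.eq_zero_iff_mem.mpr htm
  -- the counting argument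
  set S := Finset.univ.filter (fun i : Fin m => v (c : K) < v ((a i : A) : K)) with hS
  set T : Finset (Fin n → κ) := S.image (fun i => G ((Pi.single i 1 : Fin m → A))) with hT
  have hspan : ⊤ ≤ Submodule.span κ (T : Set (Fin n → κ)) := by
    intro w _
    obtain ⟨x, rfl⟩ := hGsurj w
    have hx : ∑ i, x i • (Pi.single i 1 : Fin m → A) = x := by
      rw [← Finset.univ_sum_single x]
      refine Finset.sum_congr rfl fun i _ => ?_
      rw [← Pi.single_smul, smul_eq_mul, mul_one]
      simp
    have hGx : G x = ∑ i ∈ S, x i • G ((Pi.single i 1 : Fin m → A)) := by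
      conv_lhs => rw [← hx]
      rw [map_sum]
      rw [← Finset.sum_filter_add_sum_filter_not Finset.univ
        (fun i : Fin m => v (c : K) < v ((a i : A) : K)) (fun i => G (x i • (Pi.single i 1 : Fin m → A)))]
      have hz : ∑ i ∈ Finset.univ.filter
          (fun i : Fin m => ¬ v (c : K) < v ((a i : A) : K)),
          G (x i • (Pi.single i 1 : Fin m → A)) = 0 := by
        refine Finset.sum_eq_zero fun i hi => ?_
        rw [map_smul, hGzero i (Finset.mem_filter.mp hi).2, smul_zero]
      rw [hz, add_zero, ← hS]
      refine Finset.sum_congr rfl fun i _ => ?_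
      rw [map_smul]
    rw [hGx]
    refine Submodule.sum_mem _ fun i hi => ?_
    have hmem : G ((Pi.single i 1 : Fin m → A)) ∈ (T : Set (Fin n → κ)) := by
      rw [hT]
      exact Finset.mem_coe.mpr (Finset.mem_image_of_mem _ hi)
    have := Submodule.smul_mem (Submodule.span κ (T : Set (Fin n → κ)))
      (algebraMap A κ (x i)) (Submodule.subset_span hmem)
    rwa [algebraMap_smul] at this
  have hfin : n ≤ T.card := by
    have h1 : Submodule.span κ (T : Set (Fin n → κ)) = ⊤ := top_le_iff.mp hspan
    have h2 : Module.finrank κ (Fin n → κ) ≤ T.card := by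
      have := finrank_span_finset_le_card (R := κ) T
      rw [Set.finrank, h1, finrank_top] at this
      exact this
    rwa [Module.finrank_fin_fun] at h2
  have : T.card ≤ S.card := Finset.card_image_le
  omega
theorem statement4
    -- the complete rank-one valued field `(K, v)` extending `ℚ_p`, with valuation ring `O_K = A`
    {p : ℕ} [Fact p.Prime] {K : Type*} [Field K] [Algebra ℚ_[p] K]
    (v : K → ℝ)
    (hv_mul : ∀ x y : K, x ≠ 0 → y ≠ 0 → v (x * y) = v x + v y)
    (hv_add : ∀ x y : K, x ≠ 0 → y ≠ 0 → x + y ≠ 0 → min (v x) (v y) ≤ v (x + y))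
    (hv_p : v (p : K) = 1)
    (A : ValuationSubring K)
    (hA : ∀ x : K, x ≠ 0 → (x ∈ A ↔ 0 ≤ v x))
    -- a surjective homomorphism `M → M'` of (finitely presented, torsion) `O_K`-modules
    {M M' : Type*} [AddCommGroup M] [Module A M] [AddCommGroup M'] [Module A M']
    (f : M →ₗ[A] M') (hf : Function.Surjective f)
    -- the given presentations, with nonzero elementary divisors of decreasing valuation
    {m m' : ℕ} (a : Fin m → A) (b : Fin m' → A)
    (ha0 : ∀ j, a j ≠ 0) (hb0 : ∀ j, b j ≠ 0)
    (ha : ∀ i j : Fin m, i ≤ j → v (a j : K) ≤ v (a i : K))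
    (hb : ∀ i j : Fin m', i ≤ j → v (b j : K) ≤ v (b i : K))
    (eM : M ≃ₗ[A] ((j : Fin m) → A ⧸ Ideal.span {a j}))
    (eM' : M' ≃ₗ[A] ((j : Fin m') → A ⧸ Ideal.span {b j})) :
    (∀ (j : ℕ) (hm : j < m) (hm' : j < m'),
        v ((b ⟨j, hm'⟩ : A) : K) ≤ v ((a ⟨j, hm⟩ : A) : K)) ∧
      ∀ j : Fin m', m ≤ (j : ℕ) → v ((b j : A) : K) = 0 := by
  constructor
  · intro j hm hm'
    by_contra hcon
    push_neg at hcon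
    refine aux_count v hv_mul A hA f hf a b ha0 hb0 eM eM' (a ⟨j, hm⟩) (ha0 _) (j + 1) hm'
      (fun i hi => ?_) ?_
    · have hij : i ≤ (⟨j, hm'⟩ : Fin m') := by
        rw [Fin.le_def]
        simpa using Nat.lt_succ_iff.mp hi
      exact lt_of_lt_of_le hcon (hb i ⟨j, hm'⟩ hij)
    · have hsub : (Finset.univ.filter
          (fun i : Fin m => v ((a ⟨j, hm⟩ : A) : K) < v ((a i : A) : K))).card ≤ j := by
        have hcle := Finset.card_le_card_of_injOn
          (s := Finset.univ.filter
            (fun i : Fin m => v ((a ⟨j, hm⟩ : A) : K) < v ((a i : A) : K)))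
          (t := Finset.range j) (fun i : Fin m => (i : ℕ))
          (fun i hi => ?_) (fun x _ y _ h => Fin.val_injective h)
        · simpa using hcle
        · rw [Finset.mem_coe, Finset.mem_range]
          by_contra hge
          push_neg at hge
          have hji : (⟨j, hm⟩ : Fin m) ≤ i := by rw [Fin.le_def]; simpa using hge
          have := ha ⟨j, hm⟩ i hji
          have := (Finset.mem_filter.mp hi).2
          linarith
      omega
  · intro j hj
    have h0 : 0 ≤ v ((b j : A) : K) := v_nonneg' v A hA (b j) (hb0 j)
    rcases eq_or_lt_of_le h0 with h | h
    · exact h.symm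
    · exfalso
      refine aux_count v hv_mul A hA f hf a b ha0 hb0 eM eM' 1 one_ne_zero ((j : ℕ) + 1) j.isLt
        (fun i hi => ?_) ?_
      · have hij : i ≤ j := by rw [Fin.le_def]; omega
        have h1 : ((1 : A) : K) = 1 := rfl
        rw [h1, v_one_eq_zero v hv_mul]
        exact lt_of_lt_of_le h (hb i j hij)
      · have : (Finset.univ.filter
            (fun i : Fin m => v ((1 : A) : K) < v ((a i : A) : K))).card ≤ m := by
          simpa using Finset.card_le_card (Finset.filter_subset _ (Finset.univ : Finset (Fin m)))
        omega
end

section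
/- Let M be a finitely generated free O_K-module, ψ : M → M an O_K-linear endomorphism, S a finite set, (u_s)_{s∈S} units of O_K whose images in the residue field κ are pairwise distinct, and (E_s)_{s∈S} K-subspaces of M_K := M ⊗_{O_K} K such that M_K = ⊕_{s∈S} E_s (internal direct sum) and ψ_K(w) = u_s·w for every s ∈ S and w ∈ E_s, where ψ_K is the K-linear extension of ψ. Then M = ⊕_{s∈S} (M ∩ E_s). -/
set_option synthInstance.maxHeartbeats 1000000
set_option maxHeartbeats 1000000

/-!
STATEMENT 10 (key step of Proposition 4.17): if `ψ` is an endomorphism of a finite free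
`O_K`-module `M` whose generic eigenvalues are units `u_s` with pairwise distinct residues,
and `M_K = ⊕_s E_s` with `ψ = u_s` on `E_s`, then `M = ⊕_s (M ∩ E_s)`.
-/

open scoped TensorProduct

/-- If `w` is a (possibly zero) eigenvector of `f` with eigenvalue `c`, then applying any
polynomial in `f` to `w` multiplies it by the evaluation of the polynomial at `c`. -/
private lemma aeval_apply_eig {R N : Type*} [CommRing R] [AddCommGroup N] [Module R N]
    (f : Module.End R N) (c : R) (w : N) (h : f w = c • w) (q : Polynomial R) :
    Polynomial.aeval f q w = q.eval c • w := by
  have hpow : ∀ n : ℕ, (f ^ n) w = c ^ n • w := by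
    intro n
    induction n with
    | zero => simp
    | succ n ih =>
      rw [pow_succ, Module.End.mul_apply, h, map_smul, ih, smul_smul, ← pow_succ']
  induction q using Polynomial.induction_on' with
  | add p q hp hq => simp [hp, hq, add_smul]
  | monomial n a =>
      rw [Polynomial.aeval_monomial, Module.End.mul_apply, hpow,
        Module.algebraMap_end_apply, Polynomial.eval_monomial, smul_smul]

theorem statement10
    -- the complete rank-one valued field `(K, v)` extending `ℚ_p`, with valuation ring `O_K = A`
    -- and residue field `κ`
    {p : ℕ} [Fact p.Prime] {K : Type*} [Field K] [Algebra ℚ_[p] K]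
    (v : K → ℝ)
    (hv_mul : ∀ x y : K, x ≠ 0 → y ≠ 0 → v (x * y) = v x + v y)
    (hv_add : ∀ x y : K, x ≠ 0 → y ≠ 0 → x + y ≠ 0 → min (v x) (v y) ≤ v (x + y))
    (hv_p : v (p : K) = 1)
    (A : ValuationSubring K)
    (hA : ∀ x : K, x ≠ 0 → (x ∈ A ↔ 0 ≤ v x))
    -- a finitely generated free `O_K`-module `M` and an endomorphism `ψ`
    {M : Type*} [AddCommGroup M] [Module A M] [Module.Free A M] [Module.Finite A M]
    (ψ : M →ₗ[A] M)
    -- a finite set `S`, units `u_s` with pairwise distinct images in `κ`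
    {S : Type*} [Fintype S] [DecidableEq S]
    (u : S → Aˣ)
    (hu : ∀ s t : S, s ≠ t →
      IsLocalRing.residue A ((u s : A)) ≠ IsLocalRing.residue A ((u t : A)))
    -- `K`-subspaces `E_s` of `M_K` with `M_K = ⊕_s E_s` and `ψ_K = u_s • _` on `E_s`
    (E : S → Submodule K (K ⊗[A] M))
    (hE : DirectSum.IsInternal E)
    (hψ : ∀ s : S, ∀ w ∈ E s, ψ.baseChange K w = (((u s : A) : K)) • w) :
    -- conclusion: `M = ⊕_s (M ∩ E_s)`
    DirectSum.IsInternal (fun s : S =>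
      Submodule.comap (TensorProduct.mk A K M 1) ((E s).restrictScalars A)) := by
  classical
  set ι : M →ₗ[A] K ⊗[A] M := TensorProduct.mk A K M 1 with hιdef
  set N : S → Submodule A M :=
    fun s => Submodule.comap ι ((E s).restrictScalars A) with hNdef
  -- injectivity of `ι : m ↦ 1 ⊗ m`
  have halg_inj : Function.Injective (Algebra.linearMap A K) := by
    intro a b hab
    exact Subtype.ext hab
  have hrT := Module.Flat.rTensor_preserves_injective_linearMap (M := M)
    (Algebra.linearMap A K) halg_inj
  have hι_inj : Function.Injective ι := by
    have hcomp : (ι : M → K ⊗[A] M) =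
        (LinearMap.rTensor M (Algebra.linearMap A K)) ∘
          (TensorProduct.lid A M).symm := by
      funext m
      simp [hιdef, TensorProduct.mk_apply]
    rw [hcomp]
    exact hrT.comp (TensorProduct.lid A M).symm.injective
  -- the differences of eigenvalues are units in `A`
  have hunit : ∀ {s t : S}, s ≠ t → IsUnit ((u s : A) - (u t : A)) := by
    intro s t hst
    rw [← IsLocalRing.residue_ne_zero_iff_isUnit, map_sub, sub_ne_zero]
    exact hu s t hst
  -- inverses of differences
  set e : S → S → A := fun s t =>
    if h : IsUnit ((u s : A) - (u t : A)) then ((h.unit⁻¹ : Aˣ) : A) else 0 with hedef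
  have he : ∀ {s t : S}, s ≠ t → e s t * ((u s : A) - (u t : A)) = 1 := by
    intro s t hst
    rw [hedef]
    simp only
    rw [dif_pos (hunit hst)]
    exact (hunit hst).val_inv_mul
  -- the Lagrange interpolation polynomials over `A`
  set q : S → Polynomial A := fun s =>
    ∏ t ∈ Finset.univ.erase s,
      (Polynomial.C (e s t) * (Polynomial.X - Polynomial.C ((u t : A)))) with hqdef
  have hq_eval_self : ∀ s : S, (q s).eval ((u s : A)) = 1 := by
    intro s
    rw [hqdef]
    simp only [Polynomial.eval_prod, Polynomial.eval_mul, Polynomial.eval_C,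
      Polynomial.eval_sub, Polynomial.eval_X]
    refine Finset.prod_eq_one fun t ht => ?_
    exact he (Finset.ne_of_mem_erase ht).symm
  have hq_eval_other : ∀ s t : S, s ≠ t → (q s).eval ((u t : A)) = 0 := by
    intro s t hst
    rw [hqdef]
    simp only [Polynomial.eval_prod, Polynomial.eval_mul, Polynomial.eval_C,
      Polynomial.eval_sub, Polynomial.eval_X]
    refine Finset.prod_eq_zero (i := t) (Finset.mem_erase.2 ⟨hst.symm, Finset.mem_univ t⟩) ?_
    simp
  -- base change of polynomials in `ψ`
  have hbc : ∀ (r : Polynomial A) (m : M),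
      ι ((Polynomial.aeval ψ r) m)
        = (Polynomial.aeval (ψ.baseChange K) (r.map (algebraMap A K))) (ι m) := by
    intro r m
    rw [Polynomial.aeval_map_algebraMap]
    have h1 : ψ.baseChange K = Module.End.baseChangeHom A K M ψ := rfl
    rw [h1, Polynomial.aeval_algHom_apply]
    show (1 : K) ⊗ₜ[A] ((Polynomial.aeval ψ r) m)
      = ((Polynomial.aeval ψ r).baseChange K) ((1 : K) ⊗ₜ[A] m)
    rw [LinearMap.baseChange_tmul]
  -- action of these polynomials on each `E t`
  have haction : ∀ (s t : S) (w : K ⊗[A] M), w ∈ E t →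
      (Polynomial.aeval (ψ.baseChange K) ((q s).map (algebraMap A K))) w
        = (algebraMap A K ((q s).eval ((u t : A)))) • w := by
    intro s t w hw
    rw [aeval_apply_eig (ψ.baseChange K) (((u t : A) : K)) w (hψ t w hw)]
    congr 1
    rw [Polynomial.eval_map]
    exact Polynomial.eval₂_at_apply (algebraMap A K) _
  -- key operator facts, via `iSup`-induction over the internal decomposition
  have htop : (⨆ t, E t) = ⊤ := hE.submodule_iSup_eq_top
  have hmem_top : ∀ x : K ⊗[A] M, x ∈ ⨆ t, E t := by
    intro x; rw [htop]; trivial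
  have hsum_id : ∀ x : K ⊗[A] M,
      (∑ s : S, (Polynomial.aeval (ψ.baseChange K) ((q s).map (algebraMap A K)))) x = x := by
    intro x
    refine Submodule.iSup_induction (motive := fun x =>
      (∑ s : S, (Polynomial.aeval (ψ.baseChange K) ((q s).map (algebraMap A K)))) x = x)
      E (hmem_top x) ?_ (by simp) ?_
    · intro t w hw
      rw [LinearMap.sum_apply]
      have : ∀ s : S, (Polynomial.aeval (ψ.baseChange K) ((q s).map (algebraMap A K))) w
          = (if s = t then (1 : K) else 0) • w := by
        intro s
        rw [haction s t w hw]
        by_cases hst : s = t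
        · subst hst; rw [hq_eval_self, if_pos rfl, map_one]
        · rw [hq_eval_other s t hst, if_neg hst, map_zero]
      rw [Finset.sum_congr rfl fun s _ => this s, ← Finset.sum_smul]
      simp
    · intro x y hx hy
      rw [map_add, hx, hy]
  have hproj_mem : ∀ (s : S) (x : K ⊗[A] M),
      (Polynomial.aeval (ψ.baseChange K) ((q s).map (algebraMap A K))) x ∈ E s := by
    intro s x
    refine Submodule.iSup_induction (motive := fun x =>
      (Polynomial.aeval (ψ.baseChange K) ((q s).map (algebraMap A K))) x ∈ E s)
      E (hmem_top x) ?_ (by simp) ?_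
    · intro t w hw
      rw [haction s t w hw]
      by_cases hst : s = t
      · subst hst; exact Submodule.smul_mem _ _ hw
      · rw [hq_eval_other s t hst, map_zero, zero_smul]; exact Submodule.zero_mem _
    · intro x y hx hy
      rw [map_add]
      exact Submodule.add_mem _ hx hy
  -- membership in `N s`
  have hNmem : ∀ (s : S) (x : M), x ∈ N s ↔ ι x ∈ E s := by
    intro s x
    rw [hNdef]
    rfl
  -- totality
  have hsup_top : (⨆ s, N s) = ⊤ := by
    rw [Submodule.eq_top_iff']
    intro m
    have hdec : m = ∑ s : S, (Polynomial.aeval ψ (q s)) m := by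
      apply hι_inj
      rw [map_sum]
      have : ∀ s : S, ι ((Polynomial.aeval ψ (q s)) m)
          = (Polynomial.aeval (ψ.baseChange K) ((q s).map (algebraMap A K))) (ι m) :=
        fun s => hbc (q s) m
      rw [Finset.sum_congr rfl fun s _ => this s]
      have := hsum_id (ι m)
      rw [LinearMap.sum_apply] at this
      rw [this]
    rw [hdec]
    refine Submodule.sum_mem _ fun s _ => ?_
    have hin : (Polynomial.aeval ψ (q s)) m ∈ N s := by
      rw [hNmem]
      rw [hbc (q s) m]
      exact hproj_mem s (ι m)
    exact Submodule.mem_iSup_of_mem s hin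
  -- independence
  have hindep : iSupIndep N := by
    intro s
    rw [disjoint_iff]
    rw [Submodule.eq_bot_iff]
    intro x hx
    have hx1 : x ∈ N s := hx.1
    have hx2 : x ∈ ⨆ t, ⨆ _ : t ≠ s, N t := hx.2
    have hιx1 : ι x ∈ E s := (hNmem s x).1 hx1
    have hιx2 : ι x ∈ ((⨆ t, ⨆ _ : t ≠ s, E t).restrictScalars A : Submodule A (K ⊗[A] M)) := by
      have hle : Submodule.map ι (⨆ t, ⨆ _ : t ≠ s, N t)
          ≤ (⨆ t, ⨆ _ : t ≠ s, E t).restrictScalars A := by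
        simp only [Submodule.map_iSup]
        refine iSup_le fun t => iSup_le fun ht => ?_
        refine le_trans (Submodule.map_comap_le _ _) ?_
        intro y hy
        rw [Submodule.restrictScalars_mem] at hy ⊢
        exact Submodule.mem_iSup_of_mem t (Submodule.mem_iSup_of_mem ht hy)
      exact hle (Submodule.mem_map_of_mem hx2)
    rw [Submodule.restrictScalars_mem] at hιx2
    have hdisj := hE.submodule_iSupIndep s
    have : ι x ∈ (⊥ : Submodule K (K ⊗[A] M)) :=
      hdisj.le_bot ⟨hιx1, hιx2⟩
    have hz : ι x = 0 := this
    have : ι x = ι 0 := by rw [hz, map_zero]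
    have := hι_inj this
    exact this
  exact DirectSum.isInternal_submodule_of_iSupIndep_of_iSup_eq_top hindep hsup_top
end

section
/- Let P be a torsion O_K-module with an isomorphism P ≅ ⊕_{i=1}^{n} O_K/a_iO_K for nonzero elements a_1, …, a_n ∈ O_K with v(a_1) ≥ … ≥ v(a_n), and let Q be a finitely presented O_K-module which is a quotient of P and which can be generated by s elements. Then the 0-th Fitting ideal Fitt_0(Q) of Q is a nonzero principal ideal cO_K of O_K, and v(c) ≤ ∑_{j=1}^{min(s,n)} v(a_j). -/
/-!
STATEMENT 13 (key step of Proposition 4.6): if `P ≅ ⊕_{i=1}^n O_K/a_i` (decreasing valuations)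
and `Q` is a finitely presented quotient of `P` generated by `s` elements, then `Fitt_0(Q)` is a
nonzero principal ideal `cO_K` with `v(c) ≤ ∑_{j=1}^{min(s,n)} v(a_j)`.
-/

/-- The 0-th Fitting ideal of a module `Q` over a commutative ring `R`: the ideal generated by
the determinants of all square relation matrices of a finite presentation of `Q` (the span does
not depend on the chosen surjection `R^t → Q`, so we take the supremum over all of them). -/
noncomputable def fittingIdealZero (R : Type*) [CommRing R] (Q : Type*) [AddCommGroup Q]
    [Module R Q] : Ideal R :=
  ⨆ (t : ℕ) (σ : (Fin t → R) →ₗ[R] Q) (_ : Function.Surjective σ),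
    Ideal.span {d : R | ∃ B : Matrix (Fin t) (Fin t) R,
      (∀ j : Fin t, σ (fun i => B i j) = 0) ∧ d = B.det}

section Aux
open Matrix

variable {R : Type*} [CommRing R] {Q : Type*} [AddCommGroup Q] [Module R Q]

/-- The ideal generated by determinants of square matrices all of whose columns are
relations of the generating map `τ`. -/
def relIdeal {t : ℕ} (τ : (Fin t → R) →ₗ[R] Q) : Ideal R :=
  Ideal.span {d : R | ∃ B : Matrix (Fin t) (Fin t) R,
    (∀ j : Fin t, τ (fun i => B i j) = 0) ∧ d = B.det}

lemma det_mem_relIdeal {t : ℕ} {τ : (Fin t → R) →ₗ[R] Q} (B : Matrix (Fin t) (Fin t) R)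
    (hB : ∀ j, τ (fun i => B i j) = 0) : B.det ∈ relIdeal τ :=
  Ideal.subset_span ⟨B, hB, rfl⟩

/-- Extend a generating map by one more generator. -/
def extMap {m : ℕ} (ρ : (Fin m → R) →ₗ[R] Q) (x : Q) : (Fin (m + 1) → R) →ₗ[R] Q :=
  ρ.comp (LinearMap.funLeft R R Fin.castSucc) + (LinearMap.proj (Fin.last m)).smulRight x

lemma extMap_apply {m : ℕ} (ρ : (Fin m → R) →ₗ[R] Q) (x : Q) (u : Fin (m + 1) → R) :
    extMap ρ x u = ρ (fun i => u i.castSucc) + u (Fin.last m) • x := rfl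

lemma exists_dvd_all (hdvd : ∀ x y : R, x ∣ y ∨ y ∣ x) {m : ℕ} (f : Fin (m + 1) → R) :
    ∃ i₀, ∀ i, f i₀ ∣ f i := by
  induction m with
  | zero =>
    refine ⟨0, fun i => ?_⟩
    have : i = 0 := by omega
    simp [this]
  | succ m ih =>
    obtain ⟨i₀, hi₀⟩ := ih (fun i => f i.castSucc)
    rcases hdvd (f i₀.castSucc) (f (Fin.last (m + 1))) with h | h
    · refine ⟨i₀.castSucc, fun i => ?_⟩
      rcases Fin.eq_castSucc_or_eq_last i with ⟨j, rfl⟩ | rfl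
      · exact hi₀ j
      · exact h
    · refine ⟨Fin.last (m + 1), fun i => ?_⟩
      rcases Fin.eq_castSucc_or_eq_last i with ⟨j, rfl⟩ | rfl
      · exact h.trans (hi₀ j)
      · exact dvd_rfl

lemma relIdeal_extMap_le (hdvd : ∀ x y : R, x ∣ y ∨ y ∣ x) {m : ℕ}
    (ρ : (Fin m → R) →ₗ[R] Q) (x : Q) : relIdeal (extMap ρ x) ≤ relIdeal ρ := by
  classical
  rw [relIdeal, Ideal.span_le]
  rintro d ⟨B, hB, rfl⟩
  set y : Fin (m + 1) → R := fun i => B (Fin.last m) i with hy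
  by_cases h0 : ∀ i, y i = 0
  · have : B.det = 0 := Matrix.det_eq_zero_of_row_eq_zero (Fin.last m) h0
    rw [this]; exact Ideal.zero_mem _
  · obtain ⟨i₀, hi₀⟩ := exists_dvd_all hdvd y
    have hy₀ : y i₀ ≠ 0 := by
      intro h
      exact h0 fun i => by simpa [h] using (hi₀ i)
    choose e he using hi₀
    set c : Fin (m + 1) → R := fun i => if i = i₀ then 0 else -(e i) with hc
    set M' : Matrix (Fin (m + 1)) (Fin (m + 1)) R :=
      fun i j => Bᵀ i j + c i * Bᵀ i₀ j with hM'
    have hdet : M'.det = B.det := by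
      rw [Matrix.det_eq_of_forall_row_eq_smul_add_const c i₀ (by simp [hc]) (fun i j => rfl)]
      exact Matrix.det_transpose B
    -- last column of M' vanishes except at i₀
    have hlast : ∀ i, i ≠ i₀ → M' i (Fin.last m) = 0 := by
      intro i hi
      have : Bᵀ i (Fin.last m) = y i := rfl
      simp only [hM', hc, if_neg hi, Matrix.transpose_apply]
      have := he i
      rw [show B (Fin.last m) i = y i from rfl, this]
      ring
    -- expand along the last column
    have hexp : M'.det = (-1) ^ ((i₀ : ℕ) + (m : ℕ)) * M' i₀ (Fin.last m) *
        (M'.submatrix i₀.succAbove (Fin.last m).succAbove).det := by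
      rw [Matrix.det_succ_column M' (Fin.last m)]
      rw [Finset.sum_eq_single i₀]
      · simp [Fin.val_last]
      · intro i _ hi
        rw [hlast i hi]; ring
      · intro h; exact absurd (Finset.mem_univ i₀) h
    set N := M'.submatrix i₀.succAbove (Fin.last m).succAbove with hN
    have hNdet : N.det ∈ relIdeal ρ := by
      rw [← Matrix.det_transpose N]
      refine det_mem_relIdeal _ ?_
      intro j
      -- column j of Nᵀ is row j of N
      have hw : ∀ l, (fun l => M' (i₀.succAbove j) l) l =
          (fun i => B i (i₀.succAbove j)) l + c (i₀.succAbove j) * (fun i => B i i₀) l := fun l => rfl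
      have hker : extMap ρ x (fun l => M' (i₀.succAbove j) l) = 0 := by
        have heq : (fun l => M' (i₀.succAbove j) l) =
            (fun i => B i (i₀.succAbove j)) + c (i₀.succAbove j) • (fun i => B i i₀) := by
          funext l
          simp only [Pi.add_apply, Pi.smul_apply, smul_eq_mul]
          rfl
        rw [heq, map_add, LinearMap.map_smul, hB, hB, smul_zero, add_zero]
      have hlast0 : M' (i₀.succAbove j) (Fin.last m) = 0 :=
        hlast _ (Fin.succAbove_ne i₀ j)
      rw [extMap_apply] at hker
      simp only [hlast0, zero_smul, add_zero] at hker
      have : (fun i => Nᵀ i j) = fun i => M' (i₀.succAbove j) i.castSucc := by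
        funext i
        simp [hN, Matrix.transpose_apply, Matrix.submatrix_apply, Fin.succAbove_last]
      rw [this]
      exact hker
    rw [← hdet, hexp]
    exact Ideal.mul_mem_left _ _ hNdet

/-- Iterated extension of a generating map by `t` more generators. -/
def multiext {s : ℕ} (σ : (Fin s → R) →ₗ[R] Q) : (t : ℕ) → (Fin t → Q) →
    ((Fin (s + t) → R) →ₗ[R] Q)
  | 0, _ => σ.comp (LinearMap.funLeft R R (Fin.castAdd 0))
  | (t + 1), x => extMap (multiext σ t (fun k => x k.castSucc)) (x (Fin.last t))

lemma multiext_apply {s : ℕ} (σ : (Fin s → R) →ₗ[R] Q) :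
    ∀ (t : ℕ) (x : Fin t → Q) (u : Fin (s + t) → R),
      multiext σ t x u = σ (fun j => u (Fin.castAdd t j)) + ∑ k, u (Fin.natAdd s k) • x k := by
  intro t
  induction t with
  | zero =>
    intro x u
    show σ ((LinearMap.funLeft R R (Fin.castAdd 0)) u) = _
    simp only [Finset.univ_eq_empty, Finset.sum_empty, add_zero]
    rfl
  | succ t ih =>
    intro x u
    show extMap (multiext σ t (fun k => x k.castSucc)) (x (Fin.last t)) u = _
    rw [extMap_apply, ih]
    rw [Fin.sum_univ_castSucc (f := fun k : Fin (t+1) => u (Fin.natAdd s k) • x k)]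
    have h1 : (fun j => (fun i : Fin (s+t) => u i.castSucc) (Fin.castAdd t j)) =
        (fun j => u (Fin.castAdd (t+1) j)) := by
      rfl
    have h2 : ∀ k : Fin t, (fun i : Fin (s+t) => u i.castSucc) (Fin.natAdd s k) =
        u (Fin.natAdd s k.castSucc) := by
      intro k; rfl
    have h3 : u (Fin.last (s + t)) = u (Fin.natAdd s (Fin.last t)) := by
      rfl
    rw [h1, h3, add_assoc]
    rfl

lemma relIdeal_multiext_le (hdvd : ∀ x y : R, x ∣ y ∨ y ∣ x) {s : ℕ}
    (σ : (Fin s → R) →ₗ[R] Q) (t : ℕ) (x : Fin t → Q) :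
    relIdeal (multiext σ t x) ≤ relIdeal σ := by
  induction t with
  | zero =>
    have : multiext σ 0 x = σ := LinearMap.ext fun u => rfl
    rw [this]
  | succ t ih =>
    exact le_trans (relIdeal_extMap_le hdvd _ _) (ih _)

/-- One direction of Fitting's lemma: the relation-determinant ideal of any surjective
presentation is contained in that of any other presentation. -/
lemma relIdeal_le_relIdeal (hdvd : ∀ x y : R, x ∣ y ∨ y ∣ x) {s t : ℕ}
    (σ : (Fin s → R) →ₗ[R] Q) (τ : (Fin t → R) →ₗ[R] Q) (hτ : Function.Surjective τ) :
    relIdeal τ ≤ relIdeal σ := by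
  classical
  set x : Fin t → Q := fun k => τ (fun j => if k = j then 1 else 0) with hx
  set ρ := multiext σ t x with hρ
  refine le_trans ?_ (relIdeal_multiext_le hdvd σ t x)
  rw [relIdeal, Ideal.span_le]
  rintro d ⟨B, hB, rfl⟩
  -- lift the standard generators of the σ-block through τ
  have hW : ∀ j : Fin s, ∃ w : Fin t → R, τ w = - σ (fun r => if r = j then 1 else 0) :=
    fun j => hτ _
  choose W hW using hW
  set Cblk : Matrix (Fin s ⊕ Fin t) (Fin s ⊕ Fin t) R :=
    Matrix.fromBlocks 1 0 (Matrix.of fun k j => W j k) B with hCblk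
  set C : Matrix (Fin (s + t)) (Fin (s + t)) R :=
    Cblk.submatrix finSumFinEquiv.symm finSumFinEquiv.symm with hC
  have hcols : ∀ j', ρ (fun i => C i j') = 0 := by
    intro j'
    have happ : ρ (fun i => C i j') =
        σ (fun r => Cblk (Sum.inl r) (finSumFinEquiv.symm j')) +
        ∑ k, Cblk (Sum.inr k) (finSumFinEquiv.symm j') • x k := by
      rw [hρ, multiext_apply]
      congr 1
      · congr 1
        funext r
        simp [hC, Matrix.submatrix_apply, finSumFinEquiv_symm_apply_castAdd]
      · exact Finset.sum_congr rfl (fun k _ => by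
          simp [hC, Matrix.submatrix_apply, finSumFinEquiv_symm_apply_natAdd])
    rw [happ]
    rcases h : finSumFinEquiv.symm j' with j | mm
    · have h1 : (fun r => Cblk (Sum.inl r) (Sum.inl j)) =
          (fun r => if r = j then (1 : R) else 0) := by
        funext r
        simp [hCblk, Matrix.fromBlocks, Matrix.one_apply]
      have h2 : ∑ k, Cblk (Sum.inr k) (Sum.inl j) • x k = τ (W j) := by
        rw [LinearMap.pi_apply_eq_sum_univ τ (W j)]
        exact Finset.sum_congr rfl (fun k _ => by simp [hCblk, Matrix.fromBlocks, hx])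
      rw [h1, h2, hW j]
      abel
    · have h1 : (fun r => Cblk (Sum.inl r) (Sum.inr mm)) = (0 : Fin s → R) := by
        funext r
        simp [hCblk, Matrix.fromBlocks]
      have h2 : ∑ k, Cblk (Sum.inr k) (Sum.inr mm) • x k = τ (fun k => B k mm) := by
        rw [LinearMap.pi_apply_eq_sum_univ τ]
        exact Finset.sum_congr rfl (fun k _ => by simp [hCblk, Matrix.fromBlocks, hx])
      rw [h1, h2, hB mm, map_zero, add_zero]
  have hdet : C.det = B.det := by
    rw [hC, Matrix.det_submatrix_equiv_self, hCblk, Matrix.det_fromBlocks_zero₁₂,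
      Matrix.det_one, one_mul]
  rw [← hdet]
  exact det_mem_relIdeal C hcols

/-- Key membership: if `σ (aₖ • tvecₖ) = 0` and the rows `δⱼ - ∑ₖ uⱼₖ • tvecₖ` are relations,
then any `z` divisible by all products `∏ⱼ (φ j).elim 1 a` over "partial injections" `φ`
belongs to the relation-determinant ideal of `σ`. -/
lemma prod_mem_relIdeal {s n : ℕ} (σ : (Fin s → R) →ₗ[R] Q) (a : Fin n → R) (z : R)
    (tvec : Fin n → Fin s → R) (u : Fin s → Fin n → R)
    (hta : ∀ k, σ (a k • tvec k) = 0)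
    (hw : ∀ j, σ (Pi.single j 1 - ∑ k, u j k • tvec k) = 0)
    (hz : ∀ φ : Fin s → Option (Fin n),
      (∀ j j' k, φ j = some k → φ j' = some k → j = j') →
      (∏ j, (φ j).elim 1 a) ∣ z) :
    z ∈ relIdeal σ := by
  classical
  set D := (Matrix.detRowAlternating : ((Fin s → R) [⋀^Fin s]→ₗ[R] R))
  set wvec : Fin s → (Fin s → R) := fun j => Pi.single j 1 - ∑ k, u j k • tvec k with hwvec
  set F : (j : Fin s) → Option (Fin n) → (Fin s → R) :=
    fun j o => o.elim (wvec j) (fun k => u j k • tvec k) with hF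
  have hsum : ∀ j, ∑ o : Option (Fin n), F j o = Pi.single j 1 := by
    intro j
    rw [Fintype.sum_option]
    show Pi.single j 1 - (∑ k, u j k • tvec k) + ∑ k, u j k • tvec k = _
    exact sub_add_cancel _ _
  have h1 : (1 : R) = ∑ φ : Fin s → Option (Fin n), D (fun j => F j (φ j)) := by
    have e1 : (1 : R) = D (fun j => Pi.single j 1) := by
      have : (fun j => (Pi.single j 1 : Fin s → R)) = (1 : Matrix (Fin s) (Fin s) R) := by
        funext j i
        simp [Matrix.one_apply, Pi.single_apply, eq_comm]
      rw [this]
      exact (Matrix.det_one).symm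
    rw [e1]
    have := D.toMultilinearMap.map_sum (g := F)
    simp only [AlternatingMap.coe_multilinearMap] at this
    rw [← this]
    congr 1
    funext j
    rw [hsum]
  have hterm : ∀ φ : Fin s → Option (Fin n), z * D (fun j => F j (φ j)) ∈ relIdeal σ := by
    intro φ
    set cφ : Fin s → R := fun j => (φ j).elim 1 (u j) with hcφ
    set mφ : Fin s → (Fin s → R) := fun j => (φ j).elim (wvec j) tvec with hmφ
    have hFφ : (fun j => F j (φ j)) = fun j => cφ j • mφ j := by
      funext j
      rcases hφj : φ j with _ | k <;> simp [hF, hcφ, hmφ, hφj]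
    rw [hFφ]
    have hsmul : D (fun j => cφ j • mφ j) = (∏ j, cφ j) • D mφ :=
      D.toMultilinearMap.map_smul_univ cφ mφ
    rw [hsmul]
    by_cases hinj : ∀ j j' k, φ j = some k → φ j' = some k → j = j'
    · -- the injective case: scale the tvec-rows by the aₖ
      have h2 : D (fun j => ((φ j).elim 1 a) • mφ j) = (∏ j, (φ j).elim 1 a) • D mφ :=
        D.toMultilinearMap.map_smul_univ _ mφ
      have h3 : D (fun j => ((φ j).elim 1 a) • mφ j) ∈ relIdeal σ := by
        have : D (fun j => ((φ j).elim 1 a) • mφ j) =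
            ((Matrix.of (fun j => ((φ j).elim 1 a) • mφ j))ᵀ).det := by
          rw [Matrix.det_transpose]
          rfl
        rw [this]
        refine det_mem_relIdeal _ ?_
        intro j
        have hcol : (fun i => (Matrix.of (fun j => ((φ j).elim 1 a) • mφ j))ᵀ i j) =
            ((φ j).elim 1 a) • mφ j := rfl
        rw [hcol]
        rcases hφj : φ j with _ | k
        · simpa [hmφ, hφj, hwvec] using hw j
        · have hgoal : ((some k).elim 1 a : R) • mφ j = a k • tvec k := by simp [hmφ, hφj]
          rw [hgoal]
          exact hta k
      obtain ⟨e, he⟩ := hz φ hinj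
      have : z * ((∏ j, cφ j) • D mφ) =
          (e * (∏ j, cφ j)) * ((∏ j, (φ j).elim 1 a) • D mφ) := by
        rw [smul_eq_mul, smul_eq_mul, he]; ring
      rw [this, ← h2]
      exact Ideal.mul_mem_left _ _ h3
    · -- two rows are equal to the same tvec k: the determinant vanishes
      push_neg at hinj
      obtain ⟨j, j', k, hj, hj', hne⟩ := hinj
      have hzero : D mφ = 0 := by
        refine D.map_eq_zero_of_eq mφ ?_ hne
        simp [hmφ, hj, hj']
      rw [hzero, smul_zero, mul_zero]
      exact Ideal.zero_mem _
  have hfin : z = ∑ φ : Fin s → Option (Fin n), z * D (fun j => F j (φ j)) := by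
    rw [← Finset.mul_sum, ← h1, mul_one]
  rw [hfin]
  exact Ideal.sum_mem _ (fun φ _ => hterm φ)

lemma span_finset_principal (hdvd : ∀ x y : R, x ∣ y ∨ y ∣ x) (S : Finset R) :
    ∃ c : R, Ideal.span (S : Set R) = Ideal.span {c} := by
  classical
  induction S using Finset.induction_on with
  | empty =>
    refine ⟨0, ?_⟩
    rw [Finset.coe_empty, Ideal.span_empty, Ideal.span_singleton_eq_bot.mpr rfl]
  | @insert x S hx ih =>
    obtain ⟨c, hc⟩ := ih
    rw [Finset.coe_insert, Ideal.span_insert, hc]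
    rcases hdvd x c with h | h
    · exact ⟨x, by rw [sup_eq_left.mpr (Ideal.span_singleton_le_span_singleton.mpr h)]⟩
    · exact ⟨c, by rw [sup_eq_right.mpr (Ideal.span_singleton_le_span_singleton.mpr h)]⟩

lemma relIdeal_principal (hdvd : ∀ x y : R, x ∣ y ∨ y ∣ x) {t : ℕ}
    (τ : (Fin t → R) →ₗ[R] Q) (hker : (LinearMap.ker τ).FG) :
    ∃ c : R, relIdeal τ = Ideal.span {c} := by
  classical
  obtain ⟨Y, hY⟩ := hker
  set D := (Matrix.detRowAlternating : ((Fin t → R) [⋀^Fin t]→ₗ[R] R))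
  set G : Finset R := Finset.image
    (fun c : Fin t → ↥Y => (Matrix.of (fun i j => (c j : Fin t → R) i)).det) Finset.univ with hG
  have hGI : relIdeal τ = Ideal.span (G : Set R) := by
    apply le_antisymm
    · rw [relIdeal, Ideal.span_le]
      rintro d ⟨B, hB, rfl⟩
      have hcol : ∀ j, (fun i => B i j) ∈ Submodule.span R (Set.range ((↑) : ↥Y → (Fin t → R))) := by
        intro j
        rw [show Set.range ((↑) : ↥Y → (Fin t → R)) = (Y : Set (Fin t → R)) from
          Subtype.range_coe, hY]
        exact LinearMap.mem_ker.mpr (hB j)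
      have hcol' : ∀ j, ∃ f : ↥Y → R, ∑ y : ↥Y, f y • (y : Fin t → R) = (fun i => B i j) :=
        fun j => (Submodule.mem_span_range_iff_exists_fun R).mp (hcol j)
      choose f hf using hcol'
      have hBt : B.det = D (fun j => ∑ y : ↥Y, f j y • (y : Fin t → R)) := by
        rw [← Matrix.det_transpose B]
        congr 1
        funext j
        exact (hf j).symm
      rw [hBt]
      have hexp := D.toMultilinearMap.map_sum (g := fun j (y : ↥Y) => f j y • (y : Fin t → R))
      simp only [AlternatingMap.coe_multilinearMap] at hexp
      rw [hexp]
      refine Ideal.sum_mem _ (fun r _ => ?_)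
      have hsm := D.toMultilinearMap.map_smul_univ (fun j => f j (r j))
        (fun j => ((r j : Fin t → R)))
      simp only [AlternatingMap.coe_multilinearMap] at hsm
      rw [hsm, smul_eq_mul]
      refine Ideal.mul_mem_left _ _ ?_
      have : D (fun j => ((r j : Fin t → R))) =
          (Matrix.of (fun i j => (r j : Fin t → R) i)).det := by
        rw [← Matrix.det_transpose]
        rfl
      rw [this]
      exact Ideal.subset_span (Finset.mem_image.mpr ⟨r, Finset.mem_univ r, rfl⟩)
    · rw [Ideal.span_le]
      intro d hd
      rw [hG] at hd
      simp only [Finset.coe_image, Set.mem_image] at hd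
      obtain ⟨c, _, rfl⟩ := hd
      refine det_mem_relIdeal _ ?_
      intro j
      have : (fun i => (Matrix.of (fun i j => (c j : Fin t → R) i)) i j) = ((c j : Fin t → R)) := rfl
      rw [this]
      have hmem : ((c j : Fin t → R)) ∈ LinearMap.ker τ := by
        rw [← hY]
        exact Submodule.subset_span (c j).2
      exact LinearMap.mem_ker.mp hmem
  obtain ⟨c, hc⟩ := span_finset_principal hdvd G
  exact ⟨c, hGI.trans hc⟩



lemma sum_le_sum_range {w : ℕ → ℝ} (hmono : ∀ i j, i ≤ j → w j ≤ w i) (h0 : ∀ i, 0 ≤ w i)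
    (T : Finset ℕ) : ∑ i ∈ T, w i ≤ ∑ i ∈ Finset.range T.card, w i := by
  classical
  induction T using Finset.strongInductionOn with
  | _ T ih =>
    rcases T.eq_empty_or_nonempty with rfl | hT
    · simp
    · set M := T.max' hT with hM
      have hMmem : M ∈ T := T.max'_mem hT
      have hss : T.erase M ⊂ T := Finset.erase_ssubset hMmem
      have hcard : (T.erase M).card = T.card - 1 := Finset.card_erase_of_mem hMmem
      have hcard1 : 1 ≤ T.card := Finset.card_pos.mpr hT
      have hMc : T.card - 1 ≤ M := by
        have hsub : T ⊆ Finset.range (M + 1) := by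
          intro i hi
          exact Finset.mem_range.mpr (Nat.lt_succ_of_le (T.le_max' i hi))
        have := Finset.card_le_card hsub
        rw [Finset.card_range] at this
        omega
      obtain ⟨m, hm⟩ : ∃ m, T.card = m + 1 := ⟨T.card - 1, by omega⟩
      have hm' : T.card - 1 = m := by omega
      rw [← Finset.add_sum_erase _ _ hMmem, hm, Finset.sum_range_succ]
      have h1 : ∑ i ∈ T.erase M, w i ≤ ∑ i ∈ Finset.range m, w i := by
        have := ih (T.erase M) hss
        rwa [hcard, hm'] at this
      have h2 : w M ≤ w m := hmono m M (by omega)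
      linarith

end Aux

set_option maxHeartbeats 1000000 in
theorem statement13
    -- the complete rank-one valued field `(K, v)` extending `ℚ_p`, with valuation ring `O_K = A`
    {p : ℕ} [Fact p.Prime] {K : Type*} [Field K] [Algebra ℚ_[p] K]
    (v : K → ℝ)
    (hv_mul : ∀ x y : K, x ≠ 0 → y ≠ 0 → v (x * y) = v x + v y)
    (hv_add : ∀ x y : K, x ≠ 0 → y ≠ 0 → x + y ≠ 0 → min (v x) (v y) ≤ v (x + y))
    (hv_p : v (p : K) = 1)
    (A : ValuationSubring K)
    (hA : ∀ x : K, x ≠ 0 → (x ∈ A ↔ 0 ≤ v x))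
    -- a torsion module `P ≅ ⊕_{i=1}^n O_K/a_iO_K`, valuations in decreasing order
    {P : Type*} [AddCommGroup P] [Module A P]
    {n : ℕ} (a : Fin n → A) (ha0 : ∀ j, a j ≠ 0)
    (ha : ∀ i j : Fin n, i ≤ j → v ((a j : A) : K) ≤ v ((a i : A) : K))
    (eP : P ≃ₗ[A] ((j : Fin n) → A ⧸ Ideal.span {a j}))
    -- a finitely presented quotient `Q` of `P`, generated by `s` elements
    {Q : Type*} [AddCommGroup Q] [Module A Q] [Module.FinitePresentation A Q]
    (q : P →ₗ[A] Q) (hq : Function.Surjective q)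
    (s : ℕ) (g : Fin s → Q) (hg : Submodule.span A (Set.range g) = ⊤) :
    -- conclusion: `Fitt_0(Q) = cO_K` is a nonzero principal ideal,
    -- with `v(c) ≤ ∑_{j=1}^{min(s,n)} v(a_j)`
    ∃ c : A, c ≠ 0 ∧ fittingIdealZero A Q = Ideal.span {c} ∧
      v ((c : A) : K) ≤ ∑ j ∈ Finset.univ.filter (fun j : Fin n => (j : ℕ) < s),
        v ((a j : A) : K) := by
  classical
  -- basic valuation facts
  have hKinj : ∀ x : A, x ≠ 0 → ((x : K) ≠ 0) := by
    intro x hx h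
    exact hx (Subtype.ext h)
  have hv1 : v (1 : K) = 0 := by
    have := hv_mul 1 1 one_ne_zero one_ne_zero
    rw [mul_one] at this
    linarith
  have hvA : ∀ x : A, x ≠ 0 → 0 ≤ v (x : K) := fun x hx => (hA x (hKinj x hx)).mp x.2
  have hdvdK : ∀ x y : A, x ≠ 0 → y ≠ 0 → v (x : K) ≤ v (y : K) → x ∣ y := by
    intro x y hx hy hle
    have hxK := hKinj x hx
    have hyK := hKinj y hy
    set k : K := (y : K) / (x : K) with hk
    have hk0 : k ≠ 0 := div_ne_zero hyK hxK
    have hvk : 0 ≤ v k := by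
      have := hv_mul k x hk0 hxK
      rw [hk, div_mul_cancel₀ _ hxK] at this
      linarith
    refine ⟨⟨k, (hA k hk0).mpr hvk⟩, Subtype.ext ?_⟩
    show (y : K) = (x : K) * k
    rw [hk, mul_div_cancel₀ _ hxK]
  have hdvd : ∀ x y : A, x ∣ y ∨ y ∣ x := by
    intro x y
    by_cases hx : x = 0
    · right; rw [hx]; exact dvd_zero y
    by_cases hy : y = 0
    · left; rw [hy]; exact dvd_zero x
    rcases le_total (v (x : K)) (v (y : K)) with h | h
    · exact Or.inl (hdvdK x y hx hy h)
    · exact Or.inr (hdvdK y x hy hx h)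
  have hprod : ∀ {ι : Type} (S : Finset ι) (f : ι → A), (∀ i ∈ S, f i ≠ 0) →
      v ((∏ i ∈ S, f i : A) : K) = ∑ i ∈ S, v ((f i : A) : K) := by
    intro ι S f hf
    classical
    induction S using Finset.induction_on with
    | empty => simpa using hv1
    | @insert i S hi ih =>
      have hfi : f i ≠ 0 := hf i (Finset.mem_insert_self i S)
      have hfS : ∀ j ∈ S, f j ≠ 0 := fun j hj => hf j (Finset.mem_insert_of_mem hj)
      have hprodS : (∏ j ∈ S, f j) ≠ 0 := Finset.prod_ne_zero_iff.mpr hfS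
      rw [Finset.prod_insert hi, Finset.sum_insert hi, ← ih hfS]
      have hcoe : ((f i * ∏ j ∈ S, f j : A) : K) = (f i : K) * ((∏ j ∈ S, f j : A) : K) := rfl
      rw [hcoe]
      exact hv_mul _ _ (hKinj _ hfi) (hKinj _ hprodS)
  -- the distinguished product
  set z : A := ∏ i ∈ Finset.univ.filter (fun j : Fin n => (j : ℕ) < s), a i with hzdef
  have hz0 : z ≠ 0 := Finset.prod_ne_zero_iff.mpr (fun i _ => ha0 i)
  have hvz : v (z : K) = ∑ j ∈ Finset.univ.filter (fun j : Fin n => (j : ℕ) < s),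
      v ((a j : A) : K) := hprod _ _ (fun i _ => ha0 i)
  -- the presentation via `g`
  set σg : (Fin s → A) →ₗ[A] Q :=
    { toFun := fun u => ∑ j, u j • g j,
      map_add' := fun u w => by simp [add_smul, Finset.sum_add_distrib],
      map_smul' := fun c u => by simp [mul_smul, Finset.smul_sum] } with hσgdef
  have hσg : Function.Surjective σg := by
    intro x
    have hx : x ∈ Submodule.span A (Set.range g) := by rw [hg]; trivial
    obtain ⟨c, hc⟩ := (Submodule.mem_span_range_iff_exists_fun A).mp hx
    exact ⟨c, hc⟩
  have hσg_single : ∀ j, σg (Pi.single j 1) = g j := by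
    intro j
    have h0 : σg (Pi.single j 1) = ∑ i, (Pi.single j (1 : A) : Fin s → A) i • g i := rfl
    rw [h0, Finset.sum_eq_single j]
    · rw [Pi.single_eq_same, one_smul]
    · intro i _ hij
      rw [Pi.single_eq_of_ne hij, zero_smul]
    · intro h; exact absurd (Finset.mem_univ j) h
  -- the generators `r i` of `Q` coming from `P` and their `a`-relations
  set sing : (i : Fin n) → (A ⧸ Ideal.span {a i}) →ₗ[A] ((j : Fin n) → A ⧸ Ideal.span {a j}) :=
    fun i => LinearMap.single A (fun j : Fin n => A ⧸ Ideal.span {a j}) i with hsing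
  have hsum_single : ∀ f : (j : Fin n) → A ⧸ Ideal.span {a j}, ∑ i, sing i (f i) = f := by
    intro f
    have h : ∀ i, sing i (f i) = Pi.single i (f i) := fun i => rfl
    simp only [h]
    exact Finset.univ_sum_single f
  have hone : ∀ i : Fin n, (1 : A ⧸ Ideal.span {a i}) = Submodule.Quotient.mk 1 := fun i => rfl
  set qe : ((j : Fin n) → A ⧸ Ideal.span {a j}) →ₗ[A] Q := q.comp eP.symm.toLinearMap with hqedef
  have hqe : ∀ x : P, qe (eP x) = q x := by
    intro x
    show q (eP.symm (eP x)) = q x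
    rw [eP.symm_apply_apply]
  set r : Fin n → Q := fun i => qe (sing i 1) with hrdef
  have htv : ∀ i, ∃ u, σg u = r i := fun i => hσg (r i)
  choose tvec htvec using htv
  have hta : ∀ k, σg (a k • tvec k) = 0 := by
    intro k
    have h2 : a k • (1 : A ⧸ Ideal.span {a k}) = 0 := by
      rw [hone k, ← Submodule.Quotient.mk_smul, Submodule.Quotient.mk_eq_zero]
      simpa using Ideal.mem_span_singleton_self (a k)
    have e1 : a k • r k = qe (sing k (a k • 1)) := by
      rw [hrdef, ← qe.map_smul, ← (sing k).map_smul]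
    rw [σg.map_smul, htvec k, e1, h2, (sing k).map_zero, qe.map_zero]
  -- the coefficients `uu` expressing `g j` in terms of the `r i`
  have hpj : ∀ j, ∃ pjj : P, q pjj = g j := fun j => hq (g j)
  choose pj hpj using hpj
  have huu : ∀ j i, ∃ x : A, (Submodule.Quotient.mk x : A ⧸ Ideal.span {a i}) = eP (pj j) i :=
    fun j i => Submodule.Quotient.mk_surjective _ _
  choose uu huu using huu
  have hgj : ∀ j, g j = ∑ i, uu j i • r i := by
    intro j
    have h2 : ∀ i : Fin n, uu j i • (sing i 1) = sing i (eP (pj j) i) := by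
      intro i
      rw [← (sing i).map_smul]
      congr 1
      rw [hone i, ← Submodule.Quotient.mk_smul, smul_eq_mul, mul_one]
      exact huu j i
    calc g j = qe (eP (pj j)) := (hqe (pj j) ▸ (hpj j).symm : g j = qe (eP (pj j)))
    _ = qe (∑ i, sing i (eP (pj j) i)) := by rw [hsum_single (eP (pj j))]
    _ = ∑ i, uu j i • r i := by
        have hs : (∑ i, sing i (eP (pj j) i)) = ∑ i, uu j i • (sing i 1) :=
          Finset.sum_congr rfl (fun i _ => (h2 i).symm)
        rw [hs, map_sum]
        refine Finset.sum_congr rfl (fun i _ => ?_)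
        rw [qe.map_smul, hrdef]
  have hw : ∀ j, σg (Pi.single j 1 - ∑ k, uu j k • tvec k) = 0 := by
    intro j
    rw [map_sub, map_sum, hσg_single]
    have h3 : ∀ k, σg (uu j k • tvec k) = uu j k • r k := by
      intro k; rw [map_smul, htvec]
    rw [Finset.sum_congr rfl (fun k _ => h3 k), ← hgj, sub_self]
  -- `z` is divisible by each partial-injection product, via the valuation bound
  have hzdvd : ∀ φ : Fin s → Option (Fin n),
      (∀ j j' k, φ j = some k → φ j' = some k → j = j') →
      (∏ j, (φ j).elim 1 a) ∣ z := by
    intro φ hφ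
    set x : A := ∏ j, (φ j).elim 1 a with hxdef
    have hfac : ∀ j : Fin s, ((φ j).elim 1 a : A) ≠ 0 := by
      intro j
      rcases φ j with _ | k
      · exact one_ne_zero
      · exact ha0 k
    have hx0 : x ≠ 0 := Finset.prod_ne_zero_iff.mpr (fun j _ => hfac j)
    -- valuation computation
    set w' : ℕ → ℝ := fun i => if h : i < n then v ((a ⟨i, h⟩ : A) : K) else 0 with hw'
    have hw'eq : ∀ (i : ℕ) (h : i < n), w' i = v ((a ⟨i, h⟩ : A) : K) := by
      intro i h
      show (if h' : i < n then v ((a ⟨i, h'⟩ : A) : K) else 0) = _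
      rw [dif_pos h]
    have hw'0 : ∀ (i : ℕ), ¬ i < n → w' i = 0 := by
      intro i h
      show (if h' : i < n then v ((a ⟨i, h'⟩ : A) : K) else 0) = 0
      rw [dif_neg h]
    have hw'mono : ∀ i j, i ≤ j → w' j ≤ w' i := by
      intro i j hij
      by_cases hj : j < n
      · have hi : i < n := lt_of_le_of_lt hij hj
        rw [hw'eq j hj, hw'eq i hi]
        exact ha ⟨i, hi⟩ ⟨j, hj⟩ hij
      · rw [hw'0 j hj]
        by_cases hi : i < n
        · rw [hw'eq i hi]; exact hvA _ (ha0 _)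
        · rw [hw'0 i hi]
    have hw'pos : ∀ i, 0 ≤ w' i := by
      intro i
      by_cases hi : i < n
      · rw [hw'eq i hi]; exact hvA _ (ha0 _)
      · rw [hw'0 i hi]
    set ψ : Fin s → ℕ := fun j => (φ j).elim n Fin.val with hψ
    have hterm : ∀ j : Fin s, v (((φ j).elim 1 a : A) : K) = w' (ψ j) := by
      intro j
      rcases hφj : φ j with _ | k
      · have : ψ j = n := by simp [hψ, hφj]
        rw [this, hw'0 n (lt_irrefl n)]
        simpa using hv1
      · have hkn : (k : ℕ) < n := k.2
        have e := hw'eq (k : ℕ) hkn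
        simp only [Fin.eta] at e
        have hψj : ψ j = (k : ℕ) := by simp [hψ, hφj]
        rw [hψj, e]
        simp [hφj]
    have hvx : v (x : K) = ∑ j, w' (ψ j) := by
      rw [hxdef, hprod _ _ (fun j _ => hfac j)]
      exact Finset.sum_congr rfl (fun j _ => hterm j)
    -- restrict to the support of φ
    set S : Finset (Fin s) := Finset.univ.filter (fun j => (φ j).isSome) with hS
    have hsplit : ∑ j, w' (ψ j) = ∑ j ∈ S, w' (ψ j) := by
      rw [hS]
      rw [Finset.sum_filter_of_ne]
      intro j _ hne
      rcases hφj : φ j with _ | k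
      · exfalso
        apply hne
        simp [hψ, hφj, hw']
      · simp [hφj]
    have hinjS : ∀ j ∈ S, ∀ j' ∈ S, ψ j = ψ j' → j = j' := by
      intro j hj j' hj' hψeq
      rw [hS, Finset.mem_filter] at hj hj'
      obtain ⟨k, hk⟩ := Option.isSome_iff_exists.mp hj.2
      obtain ⟨k', hk'⟩ := Option.isSome_iff_exists.mp hj'.2
      have : (k : ℕ) = (k' : ℕ) := by
        simpa [hψ, hk, hk'] using hψeq
      have hkk' : k = k' := Fin.ext this
      exact hφ j j' k hk (hkk' ▸ hk')
    have himg : ∑ j ∈ S, w' (ψ j) = ∑ i ∈ S.image ψ, w' i := (Finset.sum_image hinjS).symm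
    have hcard1 : (S.image ψ).card ≤ s := by
      calc (S.image ψ).card ≤ S.card := Finset.card_image_le
      _ ≤ (Finset.univ : Finset (Fin s)).card := Finset.card_le_card (Finset.subset_univ S)
      _ = s := by rw [Finset.card_univ, Fintype.card_fin]
    have hcard2 : (S.image ψ).card ≤ n := by
      have hsub : S.image ψ ⊆ Finset.range n := by
        intro i hi
        obtain ⟨j, hj, rfl⟩ := Finset.mem_image.mp hi
        rw [hS, Finset.mem_filter] at hj
        obtain ⟨k, hk⟩ := Option.isSome_iff_exists.mp hj.2
        simp only [hψ, hk, Option.elim]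
        exact Finset.mem_range.mpr k.2
      have := Finset.card_le_card hsub
      rwa [Finset.card_range] at this
    have hstep1 : ∑ i ∈ S.image ψ, w' i ≤ ∑ i ∈ Finset.range ((S.image ψ).card), w' i :=
      sum_le_sum_range hw'mono hw'pos _
    have hstep2 : ∑ i ∈ Finset.range ((S.image ψ).card), w' i ≤
        ∑ i ∈ Finset.range (min s n), w' i := by
      refine Finset.sum_le_sum_of_subset_of_nonneg ?_ (fun i _ _ => hw'pos i)
      exact Finset.range_subset_range.mpr (le_min hcard1 hcard2)
    have hfinal : ∑ i ∈ Finset.range (min s n), w' i =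
        ∑ j ∈ Finset.univ.filter (fun j : Fin n => (j : ℕ) < s), v ((a j : A) : K) := by
      have himg2 : (Finset.univ.filter (fun j : Fin n => (j : ℕ) < s)).image Fin.val =
          Finset.range (min s n) := by
        ext i
        simp only [Finset.mem_image, Finset.mem_filter, Finset.mem_univ, true_and,
          Finset.mem_range, lt_min_iff]
        constructor
        · rintro ⟨j, hj, rfl⟩
          exact ⟨hj, j.2⟩
        · rintro ⟨h1, h2⟩
          exact ⟨⟨i, h2⟩, h1, rfl⟩
      rw [← himg2, Finset.sum_image (fun x _ y _ h => Fin.ext h)]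
      refine Finset.sum_congr rfl (fun j _ => ?_)
      have e := hw'eq (j : ℕ) j.2
      simp only [Fin.eta] at e
      exact e
    have hle : v (x : K) ≤ v (z : K) := by
      rw [hvx, hsplit, himg, hvz, ← hfinal]
      exact le_trans hstep1 hstep2
    exact hdvdK x z hx0 hz0 hle
  -- conclude
  have hzmem : z ∈ relIdeal σg := prod_mem_relIdeal σg a z tvec uu hta hw hzdvd
  have hfit : fittingIdealZero A Q = relIdeal σg := by
    apply le_antisymm
    · exact iSup_le fun t => iSup_le fun τ => iSup_le fun hτ =>
        relIdeal_le_relIdeal hdvd σg τ hτ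
    · exact le_iSup_of_le s (le_iSup_of_le σg (le_iSup_of_le hσg le_rfl))
  have hker : (LinearMap.ker σg).FG := Module.FinitePresentation.fg_ker σg hσg
  obtain ⟨c, hc⟩ := relIdeal_principal hdvd σg hker
  have hcz : c ∣ z := Ideal.mem_span_singleton.mp (hc ▸ hzmem)
  obtain ⟨e, he⟩ := hcz
  have hc0 : c ≠ 0 := by
    intro h
    rw [h, zero_mul] at he
    exact hz0 he
  have he0 : e ≠ 0 := by
    intro h
    rw [h, mul_zero] at he
    exact hz0 he
  have hvc : v (c : K) ≤ v (z : K) := by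
    have h1 : v (z : K) = v (c : K) + v (e : K) := by
      rw [he]
      have hcoe : ((c * e : A) : K) = (c : K) * (e : K) := rfl
      rw [hcoe]
      exact hv_mul _ _ (hKinj c hc0) (hKinj e he0)
    have h2 := hvA e he0
    linarith
  exact ⟨c, hc0, hfit.trans hc, by rw [← hvz]; exact hvc⟩
end

section
/- Let M be a finitely generated free O_K-module equipped with a ℤ_p-algebra homomorphism ι : O_F → End_{O_K}(M). Let r_1 ≥ r_2 ≥ … be the decreasing rearrangement of the family (r_τ)_τ over all ℚ_p-algebra embeddings τ : F → K, padded with zeros. Let M̄ := M ⊗_{O_K} κ, and for i ≥ 1 let M̄[π^i] denote the kernel of the endomorphism of M̄ induced by ι(π)^i. Then for every i ≥ 1: dim_κ M̄[π^i] ≥ r_1 + … + r_i. -/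
set_option synthInstance.maxHeartbeats 1000000
set_option maxHeartbeats 1000000

/-!
STATEMENT 14 (module-theoretic content of Proposition 3.9): with `r_1 ≥ r_2 ≥ …` the decreasing
rearrangement of `(r_τ)_τ` padded with zeros, for every `i ≥ 1` one has
`dim_κ M̄[π^i] ≥ r_1 + … + r_i`, where `M̄ = M ⊗_{O_K} κ`.
-/

open scoped TensorProduct

open Module

lemma st14_exists_dominant {K : Type*} [Field K] (A : ValuationSubring K)
    {ι : Type*} [DecidableEq ι] (s : Finset ι) (g : ι → K) (hs : s.Nonempty) :
    ∃ j0 ∈ s, ∀ j ∈ s, g j / g j0 ∈ A := by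
  classical
  induction s using Finset.cons_induction with
  | empty => exact absurd hs (by simp)
  | cons a s ha ih =>
    rcases s.eq_empty_or_nonempty with rfl | hs'
    · refine ⟨a, by simp, ?_⟩
      intro j hj
      simp only [Finset.cons_empty, Finset.mem_singleton] at hj
      subst hj
      by_cases h : g j = 0
      · simp [h, A.zero_mem]
      · simp [div_self h, A.one_mem]
    · obtain ⟨j0, hj0, H⟩ := ih hs'
      by_cases hc : g a / g j0 ∈ A
      · refine ⟨j0, Finset.mem_cons_of_mem hj0, ?_⟩
        intro j hj
        rcases Finset.mem_cons.mp hj with rfl | hj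
        · exact hc
        · exact H j hj
      · have hj0ne : g j0 ≠ 0 := by
          intro h; apply hc; simp [h, A.zero_mem]
        have hane : g a ≠ 0 := by
          intro h; apply hc; simp [h, A.zero_mem]
        have hinv : g j0 / g a ∈ A := by
          rcases A.mem_or_inv_mem (g a / g j0) with h | h
          · exact absurd h hc
          · rwa [inv_div] at h
        refine ⟨a, Finset.mem_cons_self a s, ?_⟩
        intro j hj
        rcases Finset.mem_cons.mp hj with rfl | hj
        · by_cases h : g j = 0
          · simp [h, A.zero_mem]
          · simp [div_self h, A.one_mem]
        · have : g j / g a = (g j / g j0) * (g j0 / g a) := by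
            field_simp
          rw [this]
          exact A.mul_mem _ _ (H j hj) hinv

lemma st14_tmul_injective {K : Type*} [Field K] (A : ValuationSubring K)
    {M : Type*} [AddCommGroup M] [Module A M] [Module.Free A M] [Module.Finite A M]
    : Function.Injective (fun x : M => (1 : K) ⊗ₜ[A] x) := by
  classical
  set b := Module.finBasis A M with hb
  have key : ∀ x : M, (1 : K) ⊗ₜ[A] x = 0 → x = 0 := by
    intro x hx
    have h1 : (Algebra.TensorProduct.basis K b).repr ((1:K) ⊗ₜ[A] x) = 0 := by
      rw [hx, map_zero]
    rw [Algebra.TensorProduct.basis_repr_tmul, one_smul] at h1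
    have h2 : ∀ j, algebraMap A K (b.repr x j) = 0 := by
      intro j
      have := DFunLike.congr_fun h1 j
      simpa using this
    have h3 : b.repr x = 0 := by
      ext j
      have := h2 j
      have hinj : Function.Injective (algebraMap A K) := Subtype.coe_injective
      simpa using hinj (by simpa using this)
    have := congrArg b.repr.symm h3
    simpa using this
  intro x y hxy
  have : (1 : K) ⊗ₜ[A] (x - y) = 0 := by
    rw [TensorProduct.tmul_sub]
    simpa [sub_eq_zero] using hxy
  have := key _ this
  exact sub_eq_zero.mp this

lemma st14_range_baseChange {R₀ : Type*} [CommRing R₀] {M : Type*} [AddCommGroup M] [Module R₀ M]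
    (R : Type*) [CommRing R] [Algebra R₀ R] {n : ℕ} (b : Basis (Fin n) R₀ M)
    (Ψ : Module.End R₀ M) :
    LinearMap.range (Ψ.baseChange R) =
      Submodule.span R (Set.range fun j => (1:R) ⊗ₜ[R₀] Ψ (b j)) := by
  have h : ⇑(Ψ.baseChange R) ∘ ⇑(Algebra.TensorProduct.basis R b)
      = fun j => (1:R) ⊗ₜ[R₀] Ψ (b j) := by
    funext j
    simp [Algebra.TensorProduct.basis_apply]
  rw [LinearMap.range_eq_map, ← (Algebra.TensorProduct.basis R b).span_eq,
    Submodule.map_span, ← Set.range_comp, h]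

lemma st14_semicontinuity {K : Type*} [Field K] {A : ValuationSubring K}
    {M : Type*} [AddCommGroup M] [Module A M] [Module.Free A M] [Module.Finite A M]
    (Ψ : Module.End A M) :
    finrank K (LinearMap.ker (Ψ.baseChange K)) ≤
      finrank (IsLocalRing.ResidueField A)
        (LinearMap.ker (Ψ.baseChange (IsLocalRing.ResidueField A))) := by
  classical
  set κ := IsLocalRing.ResidueField A with hκ
  set n := finrank A M with hn
  set b := Module.finBasis A M with hb
  set y : Fin n → M := fun j => Ψ (b j) with hy
  have hnK : finrank K (K ⊗[A] M) = n := Module.finrank_baseChange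
  have hnκ : finrank κ (κ ⊗[A] M) = n := Module.finrank_baseChange
  have RN1 : finrank K (LinearMap.range (Ψ.baseChange K))
      + finrank K (LinearMap.ker (Ψ.baseChange K)) = n := by
    rw [← hnK]; exact LinearMap.finrank_range_add_finrank_ker _
  have RN2 : finrank κ (LinearMap.range (Ψ.baseChange κ))
      + finrank κ (LinearMap.ker (Ψ.baseChange κ)) = n := by
    rw [← hnκ]; exact LinearMap.finrank_range_add_finrank_ker _
  -- the key rank inequality
  have key : finrank κ (LinearMap.range (Ψ.baseChange κ))
      ≤ finrank K (LinearMap.range (Ψ.baseChange K)) := by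
    rw [st14_range_baseChange K b Ψ, st14_range_baseChange κ b Ψ]
    set ybar : Fin n → κ ⊗[A] M := fun j => (1:κ) ⊗ₜ[A] y j with hybar
    set yhat : Fin n → K ⊗[A] M := fun j => (1:K) ⊗ₜ[A] y j with hyhat
    obtain ⟨T, hT1, hT2, hT3⟩ := exists_linearIndependent κ (Set.range ybar)
    have hTfin : T.Finite := (Set.finite_range _).subset hT1
    haveI : Fintype T := hTfin.fintype
    have hcard : finrank κ (Submodule.span κ (Set.range ybar)) = T.toFinset.card := by
      rw [← hT2]
      exact finrank_span_set_eq_card hT3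
    -- choose indices
    have hchoice : ∀ x : T, ∃ j, ybar j = (x : κ ⊗[A] M) := fun x => hT1 x.2
    choose c hc using hchoice
    have hcinj : Function.Injective c := by
      intro x1 x2 h
      apply Subtype.ext
      rw [← hc x1, ← hc x2, h]
    -- the corresponding family over K is linearly independent
    have Lind : LinearIndependent K (fun x : T => yhat (c x)) := by
      rw [Fintype.linearIndependent_iff]
      intro g hg
      by_contra hne
      push_neg at hne
      obtain ⟨x1, hx1⟩ := hne
      set s : Finset T := Finset.univ.filter (fun x => g x ≠ 0) with hsdef
      have hsne : s.Nonempty := ⟨x1, by simp [hsdef, hx1]⟩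
      obtain ⟨x0, hx0s, hdom⟩ := st14_exists_dominant A s g hsne
      have hgx0 : g x0 ≠ 0 := by
        simpa [hsdef] using hx0s
      have hmem : ∀ x : T, g x / g x0 ∈ A := by
        intro x
        by_cases hx : g x = 0
        · simp [hx, A.zero_mem]
        · exact hdom x (by simp [hsdef, hx])
      set a : T → A := fun x => ⟨g x / g x0, hmem x⟩ with hadef
      have S0 : ∑ x : T, ((a x : K)) • yhat (c x) = 0 := by
        have : ∀ x : T, ((a x : K)) • yhat (c x) = (g x0)⁻¹ • (g x • yhat (c x)) := by
          intro x
          rw [smul_smul]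
          have hax : ((a x : K)) = (g x0)⁻¹ * g x := by
            show g x / g x0 = _
            rw [div_eq_inv_mul]
          rw [hax]
        rw [Finset.sum_congr rfl (fun x _ => this x), ← Finset.smul_sum, hg, smul_zero]
      have S1 : (1:K) ⊗ₜ[A] (∑ x : T, (a x) • y (c x)) = 0 := by
        rw [TensorProduct.tmul_sum]
        rw [← S0]
        apply Finset.sum_congr rfl
        intro x _
        rw [hyhat]
        have : ((a x : K)) • ((1:K) ⊗ₜ[A] y (c x)) = ((a x : K) * 1) ⊗ₜ[A] y (c x) := by
          rw [TensorProduct.smul_tmul']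
          rfl
        rw [this, mul_one]
        have : ((a x : K)) ⊗ₜ[A] y (c x) = ((a x) • (1:K)) ⊗ₜ[A] y (c x) := by
          congr 1
          rw [Algebra.smul_def, mul_one]
          rfl
        rw [this, TensorProduct.smul_tmul]
      have hz : (∑ x : T, (a x) • y (c x)) = 0 := by
        have := st14_tmul_injective A (K := K)
          (M := M) (a₁ := ∑ x : T, (a x) • y (c x)) (a₂ := 0)
        simp only [TensorProduct.tmul_zero] at this
        exact this S1
      -- reduce mod the maximal ideal
      have hred : ∑ x : T, (algebraMap A κ (a x)) • ((x : κ ⊗[A] M)) = 0 := by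
        have h0 : ((TensorProduct.mk A κ M) 1) (∑ x : T, (a x) • y (c x)) = 0 := by
          rw [hz, map_zero]
        rw [map_sum] at h0
        calc ∑ x : T, (algebraMap A κ (a x)) • ((x : κ ⊗[A] M))
            = ∑ x : T, ((TensorProduct.mk A κ M) 1) ((a x) • y (c x)) := by
              apply Finset.sum_congr rfl
              intro x _
              rw [map_smul]
              rw [algebraMap_smul]
              congr 1
              exact (hc x).symm
          _ = 0 := h0
      have hall := (Fintype.linearIndependent_iff.mp hT3) (fun x => algebraMap A κ (a x)) hred
      have := hall x0
      rw [hadef] at this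
      simp only at this
      have h1 : (⟨g x0 / g x0, hmem x0⟩ : A) = 1 := by
        apply Subtype.ext
        simp [div_self hgx0]
      rw [h1, map_one] at this
      exact one_ne_zero this
    -- conclude
    have hle : finrank K (Submodule.span K (Set.range fun x : T => yhat (c x)))
        ≤ finrank K (Submodule.span K (Set.range yhat)) := by
      apply Submodule.finrank_mono
      apply Submodule.span_mono
      rintro _ ⟨x, rfl⟩
      exact ⟨c x, rfl⟩
    have heq : finrank K (Submodule.span K (Set.range fun x : T => yhat (c x)))
        = Fintype.card T := finrank_span_eq_card Lind
    have : T.toFinset.card = Fintype.card T := Set.toFinset_card T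
    omega
  show finrank K (LinearMap.ker (Ψ.baseChange K)) ≤ finrank κ (LinearMap.ker (Ψ.baseChange κ))
  omega

lemma st14_sort {α : Type*} [Fintype α] [DecidableEq α] (rfun : α → ℕ) (r' : ℕ → ℕ)
    (hcount : ∀ k : ℕ, 1 ≤ k →
      {i : ℕ | k ≤ r' i} = Set.Iio ((Finset.univ.filter fun τ : α => k ≤ rfun τ).card : ℕ)) :
    ∃ g : Fin (Fintype.card α) ≃ α,
      (∀ l : Fin (Fintype.card α), r' (l : ℕ) = rfun (g l)) ∧
      (∀ j : ℕ, Fintype.card α ≤ j → r' j = 0) := by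
  classical
  set d := Fintype.card α with hd
  set f0 : Fin d ≃ α := (Fintype.equivFin α).symm with hf0
  set sp := Tuple.sort (rfun ∘ f0) with hsp
  set g : Fin d ≃ α := Fin.revPerm.trans (sp.trans f0) with hg
  set ρ : Fin d → ℕ := fun l => rfun (g l) with hρ
  have hmono := Tuple.monotone_sort (rfun ∘ f0)
  have hanti : Antitone ρ := by
    intro a b hab
    have : b.rev ≤ a.rev := Fin.rev_le_rev.mpr hab
    exact hmono this
  set c : ℕ → ℕ := fun k => (Finset.univ.filter fun τ : α => k ≤ rfun τ).card with hc
  have hcd : ∀ k, c k ≤ d := by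
    intro k
    calc c k ≤ Finset.univ.card := Finset.card_filter_le _ _
      _ = d := Finset.card_univ
  have char1 : ∀ k, 1 ≤ k → ∀ j : ℕ, (k ≤ r' j ↔ j < c k) := by
    intro k hk j
    have := Set.ext_iff.mp (hcount k hk) j
    simpa using this
  have char2 : ∀ k, 1 ≤ k → ∀ l : Fin d, (k ≤ ρ l ↔ (l : ℕ) < c k) := by
    intro k hk l
    set T : Finset (Fin d) := Finset.univ.filter (fun l => k ≤ ρ l) with hT
    have hTc : T.card = c k := by
      apply Finset.card_equiv g
      intro l
      simp [hT, hc, hρ]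
    have hlow : ∀ l1 l2 : Fin d, l1 ≤ l2 → l2 ∈ T → l1 ∈ T := by
      intro l1 l2 h12 h2
      simp only [hT, Finset.mem_filter, Finset.mem_univ, true_and] at h2 ⊢
      exact le_trans h2 (hanti h12)
    have key : l ∈ T ↔ (l : ℕ) < T.card := by
      constructor
      · intro hl
        have hsub : Finset.Iic l ⊆ T := by
          intro a ha
          exact hlow a l (Finset.mem_Iic.mp ha) hl
        have := Finset.card_le_card hsub
        rw [Fin.card_Iic] at this
        omega
      · intro hl
        by_contra hnl
        have hsub : T ⊆ Finset.Iio l := by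
          intro b hb
          rw [Finset.mem_Iio]
          by_contra hbl
          exact hnl (hlow l b (not_lt.mp hbl) hb)
        have := Finset.card_le_card hsub
        rw [Fin.card_Iio] at this
        omega
    have hmem : l ∈ T ↔ k ≤ ρ l := by simp [hT]
    rw [← hmem, key, hTc]
  have hr'0 : ∀ j : ℕ, d ≤ j → r' j = 0 := by
    intro j hj
    by_contra h
    have hk : 1 ≤ r' j := Nat.one_le_iff_ne_zero.mpr h
    have := (char1 (r' j) hk j).mp le_rfl
    have := hcd (r' j)
    omega
  refine ⟨g, ?_, hr'0⟩
  intro l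
  apply le_antisymm
  · rcases Nat.eq_zero_or_pos (r' (l : ℕ)) with h0 | hpos
    · omega
    · exact (char2 _ hpos l).mpr ((char1 _ hpos (l : ℕ)).mp le_rfl)
  · rcases Nat.eq_zero_or_pos (ρ l) with h0 | hpos
    · exact h0.le.trans (Nat.zero_le _)
    · exact (char1 _ hpos (l : ℕ)).mpr ((char2 _ hpos l).mp le_rfl)

lemma st14_baseChange_list_prod {R₀ : Type*} [CommRing R₀] {M : Type*} [AddCommGroup M]
    [Module R₀ M] (R : Type*) [CommRing R] [Algebra R₀ R] (L : List (Module.End R₀ M)) :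
    (L.prod).baseChange R = (L.map (fun f => f.baseChange R)).prod := by
  have := map_list_prod (Module.End.baseChangeHom R₀ R M) L
  exact this

lemma st14_baseChange_smul_one {R₀ : Type*} [CommRing R₀] {M : Type*} [AddCommGroup M]
    [Module R₀ M] (R : Type*) [CommRing R] [Algebra R₀ R] (s : R₀) :
    ((s • 1 : Module.End R₀ M)).baseChange R
      = algebraMap R₀ R s • (1 : Module.End R (R ⊗[R₀] M)) := by
  apply LinearMap.ext
  intro z
  induction z using TensorProduct.induction_on with
  | zero => simp
  | tmul x m =>
      simp only [LinearMap.baseChange_tmul, LinearMap.smul_apply, Module.End.one_apply]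
      rw [TensorProduct.tmul_smul, algebraMap_smul]
  | add x y hx hy => simp [map_add, hx, hy, smul_add]


theorem statement14
    -- the complete rank-one valued field `(K, v)` extending `ℚ_p`, with valuation ring `O_K = A`
    -- and residue field `κ`
    {p : ℕ} [Fact p.Prime] {K : Type*} [Field K] [Algebra ℚ_[p] K]
    (v : K → ℝ)
    (hv_mul : ∀ x y : K, x ≠ 0 → y ≠ 0 → v (x * y) = v x + v y)
    (hv_add : ∀ x y : K, x ≠ 0 → y ≠ 0 → x + y ≠ 0 → min (v x) (v y) ≤ v (x + y))
    (hv_p : v (p : K) = 1)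
    (A : ValuationSubring K)
    (hA : ∀ x : K, x ≠ 0 → (x ∈ A ↔ 0 ≤ v x))
    -- the finite extension `F` of `ℚ_p`, its ring of integers `O_F`, uniformiser `π`,
    -- ramification index `e`; `K` contains a Galois closure of `F|ℚ_p`
    {F : Type*} [Field F] [Algebra ℚ_[p] F] [FiniteDimensional ℚ_[p] F]
    [Fintype (F →ₐ[ℚ_[p]] K)] [DecidableEq (F →ₐ[ℚ_[p]] K)]
    (OF : Subring F) (π : OF) (e : ℕ) (he : 0 < e)
    (hπe : ∃ u : OFˣ, (π : F) ^ e = (p : F) * ((u : OF) : F))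
    (hτO : ∀ (τ : F →ₐ[ℚ_[p]] K) (x : OF), τ (x : F) ∈ A)
    (hτπ : ∀ τ : F →ₐ[ℚ_[p]] K, v (τ (π : F)) = 1 / e)
    -- the finitely generated free `O_K`-module `M` with `O_F`-action `ι`,
    -- and the eigenspace decomposition `M_K = ⊕_τ M_{K,τ}`
    {M : Type*} [AddCommGroup M] [Module A M] [Module.Free A M] [Module.Finite A M]
    (ι : OF →+* Module.End A M)
    (hdec : DirectSum.IsInternal (fun τ : F →ₐ[ℚ_[p]] K => eigenspaceOF A OF ι τ))
    -- `r_1 ≥ r_2 ≥ …` is the decreasing rearrangement of `(r_τ)_τ`, padded with zeros: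
    -- i.e. an antitone sequence such that, for each `k ≥ 1`, the indices `i` with `r_i ≥ k`
    -- form an initial segment of length `#{τ : r_τ ≥ k}`
    (r' : ℕ → ℕ) (hr'anti : Antitone r')
    (hr'count : ∀ k : ℕ, 1 ≤ k →
      {i : ℕ | k ≤ r' i} = Set.Iio ((Finset.univ.filter fun τ : F →ₐ[ℚ_[p]] K =>
        k ≤ Module.finrank K (eigenspaceOF A OF ι τ)).card : ℕ)) :
    -- conclusion: for every `i ≥ 1`, `dim_κ M̄[π^i] ≥ r_1 + … + r_i`
    ∀ i : ℕ, 1 ≤ i →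
      ∑ j ∈ Finset.range i, r' j
        ≤ Module.finrank (IsLocalRing.ResidueField A)
            (LinearMap.ker ((ι π).baseChange (IsLocalRing.ResidueField A) ^ i)) := by
  classical
  intro i hi
  set κ := IsLocalRing.ResidueField A with hκdef
  set d := Fintype.card (F →ₐ[ℚ_[p]] K) with hd
  set rfun : (F →ₐ[ℚ_[p]] K) → ℕ := fun τ => Module.finrank K (eigenspaceOF A OF ι τ) with hrfun
  obtain ⟨g, hg1, hg2⟩ := st14_sort rfun r' hr'count
  set m := min i d with hm
  have hmi : m ≤ i := min_le_left _ _
  have hmd : m ≤ d := min_le_right _ _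
  set t : Fin m → (F →ₐ[ℚ_[p]] K) := fun l => g (Fin.castLE hmd l) with ht
  have tinj : Function.Injective t := by
    intro a b hab
    exact Fin.castLE_injective hmd (g.injective hab)
  -- combinatorial sum identity
  have hsum : ∑ j ∈ Finset.range i, r' j = ∑ l : Fin m, rfun (t l) := by
    have h1 : ∑ j ∈ Finset.range i, r' j = ∑ j ∈ Finset.range m, r' j := by
      symm
      apply Finset.sum_subset (Finset.range_subset_range.mpr hmi)
      intro j hj hnj
      rw [Finset.mem_range] at hj
      rw [Finset.mem_range, not_lt] at hnj
      apply hg2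
      rcases le_or_gt d i with hdi | hid
      · have : m = d := min_eq_right hdi
        omega
      · have : m = i := min_eq_left hid.le
        omega
    rw [h1, ← Fin.sum_univ_eq_sum_range]
    apply Finset.sum_congr rfl
    intro l _
    simpa using hg1 (Fin.castLE hmd l)
  -- basic nonvanishing facts
  set φ : Module.End A M := ι π with hφ
  have hπF : (π : F) ≠ 0 := by
    obtain ⟨u, hu⟩ := hπe
    intro h0
    rw [h0, zero_pow he.ne'] at hu
    haveI : CharZero F := charZero_of_injective_algebraMap (algebraMap ℚ_[p] F).injective
    have hp : (p : F) ≠ 0 := Nat.cast_ne_zero.mpr (Fact.out : p.Prime).ne_zero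
    have hu0 : ((u : OF) : F) ≠ 0 := by
      intro h
      exact Units.ne_zero u (Subtype.ext h)
    exact (mul_ne_zero hp hu0) hu.symm
  have hτ0 : ∀ τ : F →ₐ[ℚ_[p]] K, τ (π : F) ≠ 0 := by
    intro τ h
    apply hπF
    have hinj : Function.Injective τ := RingHom.injective (τ : F →+* K)
    apply hinj
    simpa using h
  have hv1 : v 1 = 0 := by
    have := hv_mul 1 1 one_ne_zero one_ne_zero
    rw [mul_one] at this
    linarith
  have hepos : (0:ℝ) < 1 / (e:ℝ) := by
    apply one_div_pos.mpr
    exact_mod_cast he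
  have hres0 : ∀ τ : F →ₐ[ℚ_[p]] K, algebraMap A κ (⟨τ (π:F), hτO τ π⟩ : A) = 0 := by
    intro τ
    show algebraMap A (IsLocalRing.ResidueField A) (⟨τ (π:F), hτO τ π⟩ : A) = 0
    rw [IsLocalRing.ResidueField.algebraMap_eq, IsLocalRing.residue_eq_zero_iff,
      IsLocalRing.mem_maximalIdeal, mem_nonunits_iff]
    intro hunit
    obtain ⟨w, hw⟩ := hunit.exists_right_inv
    have hK : (τ (π:F)) * (w : K) = 1 := by
      have := congrArg (fun x : A => (x : K)) hw
      simpa using this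
    have hw0 : (w : K) ≠ 0 := by
      intro h
      rw [h, mul_zero] at hK
      exact zero_ne_one hK
    have hwv : 0 ≤ v (w : K) := (hA _ hw0).mp w.2
    have hmul := hv_mul _ _ (hτ0 τ) hw0
    rw [hK, hv1, hτπ τ] at hmul
    linarith
  -- eigenvector facts
  have hscal : ∀ (τ : F →ₐ[ℚ_[p]] K) (a : OF) (w : K ⊗[A] M), w ∈ eigenspaceOF A OF ι τ →
      ((ι a).baseChange K) w = τ (a : F) • w := by
    intro τ a w hw
    have h1 : w ∈ LinearMap.ker ((ι a).baseChange K - τ (a:F) • LinearMap.id) :=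
      (Submodule.mem_iInf _).mp hw a
    rw [LinearMap.mem_ker, LinearMap.sub_apply, LinearMap.smul_apply, LinearMap.id_apply,
      sub_eq_zero] at h1
    exact h1
  have hpow : ∀ (τ : F →ₐ[ℚ_[p]] K) (w : K ⊗[A] M), w ∈ eigenspaceOF A OF ι τ → ∀ cnt : ℕ,
      (((ι π).baseChange K) ^ cnt) w = (τ (π:F)) ^ cnt • w := by
    intro τ w hw cnt
    induction cnt with
    | zero => simp
    | succ cnt ih =>
      rw [pow_succ, Module.End.mul_apply, hscal τ π w hw, map_smul, ih, smul_smul, ← pow_succ']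
  have hlist : ∀ (L : List (F →ₐ[ℚ_[p]] K)) (τ : F →ₐ[ℚ_[p]] K) (w : K ⊗[A] M),
      w ∈ eigenspaceOF A OF ι τ →
      ((L.map (fun σ => (ι π).baseChange K - σ (π:F) • (1 : Module.End K (K ⊗[A] M)))).prod) w
        = ((L.map (fun σ => τ (π:F) - σ (π:F))).prod) • w := by
    intro L
    induction L with
    | nil => intro τ w hw; simp
    | cons σ L ih =>
      intro τ w hw
      rw [List.map_cons, List.prod_cons, Module.End.mul_apply, ih τ w hw, map_smul]
      have hfac : ((ι π).baseChange K - σ (π:F) • (1 : Module.End K (K ⊗[A] M))) w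
          = (τ (π:F) - σ (π:F)) • w := by
        rw [LinearMap.sub_apply, LinearMap.smul_apply, Module.End.one_apply, hscal τ π w hw]
        exact (sub_smul _ _ _).symm
      rw [hfac, List.map_cons, List.prod_cons, smul_smul, mul_comm]
  -- the auxiliary endomorphism ψ
  set LA : List (Module.End A M) :=
    (List.ofFn t).map (fun σ => φ - (⟨σ (π:F), hτO σ π⟩ : A) • 1) with hLA
  set ψ : Module.End A M := LA.prod * φ ^ (i - m) with hψ
  have hcoeK : ∀ σ : F →ₐ[ℚ_[p]] K, (algebraMap A K) (⟨σ (π:F), hτO σ π⟩ : A) = σ (π:F) :=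
    fun σ => rfl
  have hψK : ψ.baseChange K
      = ((List.ofFn t).map
          (fun σ => (ι π).baseChange K - σ (π:F) • (1 : Module.End K (K ⊗[A] M)))).prod
        * ((ι π).baseChange K) ^ (i - m) := by
    rw [hψ, LinearMap.baseChange_mul, LinearMap.baseChange_pow]
    congr 1
    rw [hLA, st14_baseChange_list_prod, List.map_map]
    refine congrArg List.prod (List.map_congr_left (fun σ _ => ?_))
    simp only [Function.comp_apply]
    rw [LinearMap.baseChange_sub, st14_baseChange_smul_one, hcoeK, hφ]
  have hψκ : ψ.baseChange κ = ((ι π).baseChange κ) ^ i := by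
    rw [hψ, LinearMap.baseChange_mul, LinearMap.baseChange_pow]
    have h2 : LA.prod.baseChange κ = ((ι π).baseChange κ) ^ m := by
      rw [hLA, st14_baseChange_list_prod, List.map_map]
      have h3 : List.map ((fun f : Module.End A M => f.baseChange κ)
            ∘ fun σ : F →ₐ[ℚ_[p]] K => φ - (⟨σ (π:F), hτO σ π⟩ : A) • 1) (List.ofFn t)
          = List.map (fun _ => (ι π).baseChange κ) (List.ofFn t) := by
        refine List.map_congr_left (fun σ _ => ?_)
        simp only [Function.comp_apply]
        rw [LinearMap.baseChange_sub, st14_baseChange_smul_one, hres0, zero_smul]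
        exact (sub_zero (LinearMap.baseChange κ (ι π)) :)
      rw [h3, List.map_const', List.prod_replicate, List.length_ofFn]
    rw [h2, ← pow_add]
    congr 1
    omega
  -- eigenspaces are contained in the kernel of ψ over K
  have hker : ∀ l0 : Fin m, eigenspaceOF A OF ι (t l0) ≤ LinearMap.ker (ψ.baseChange K) := by
    intro l0 w hw
    rw [LinearMap.mem_ker, hψK, Module.End.mul_apply, hpow (t l0) w hw, map_smul,
      hlist (List.ofFn t) (t l0) w hw]
    have hz : ((List.ofFn t).map (fun σ => (t l0) (π:F) - σ (π:F))).prod = 0 := by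
      apply List.prod_eq_zero
      exact List.mem_map.mpr ⟨t l0, List.mem_ofFn.mpr ⟨l0, rfl⟩, sub_self _⟩
    rw [hz, zero_smul, smul_zero]
  -- lower bound for the kernel dimension over K
  haveI : Module.Finite K (K ⊗[A] M) := inferInstance
  haveI : ∀ τ : F →ₐ[ℚ_[p]] K, Module.Free K (eigenspaceOF A OF ι τ) := fun τ =>
    @Module.Free.of_divisionRing K (eigenspaceOF A OF ι τ) _ (Submodule.addCommGroup _) _
  set B := hdec.collectedBasis (fun τ => Module.finBasis K (eigenspaceOF A OF ι τ)) with hB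
  have hmemB0 := hdec.collectedBasis_mem (fun τ => Module.finBasis K (eigenspaceOF A OF ι τ))
  set J : (Σ l : Fin m, Fin (rfun (t l))) → (Σ τ : F →ₐ[ℚ_[p]] K, Fin (rfun τ)) :=
    fun x => ⟨t x.1, x.2⟩ with hJ
  have hJinj : Function.Injective J := by
    intro x y hxy
    rcases x with ⟨l1, k1⟩; rcases y with ⟨l2, k2⟩
    have h1 : t l1 = t l2 := congrArg Sigma.fst hxy
    have hl : l1 = l2 := tinj h1
    subst hl
    simpa [hJ] using hxy
  have hmemB : ∀ x : (Σ l : Fin m, Fin (rfun (t l))),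
      B (J x) ∈ LinearMap.ker (ψ.baseChange K) :=
    fun x => hker x.1 (hmemB0 (J x))
  have hind2 : LinearIndependent K (⇑B ∘ J) := B.linearIndependent.comp J hJinj
  have hspan : Submodule.span K (Set.range (⇑B ∘ J)) ≤ LinearMap.ker (ψ.baseChange K) := by
    rw [Submodule.span_le]
    rintro _ ⟨x, rfl⟩
    exact hmemB x
  have hfr : finrank K (Submodule.span K (Set.range (⇑B ∘ J)))
      = Fintype.card (Σ l : Fin m, Fin (rfun (t l))) := finrank_span_eq_card hind2
  have hcardle : Fintype.card (Σ l : Fin m, Fin (rfun (t l)))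
      ≤ finrank K (LinearMap.ker (ψ.baseChange K)) := by
    rw [← hfr]
    exact Submodule.finrank_mono hspan
  have hcards : Fintype.card (Σ l : Fin m, Fin (rfun (t l))) = ∑ l : Fin m, rfun (t l) := by
    simp [Fintype.card_sigma]
  -- semicontinuity and conclusion
  have hsemi := st14_semicontinuity (K := K) (A := A) ψ
  rw [hψκ] at hsemi
  calc ∑ j ∈ Finset.range i, r' j = ∑ l : Fin m, rfun (t l) := hsum
    _ ≤ finrank K (LinearMap.ker (ψ.baseChange K)) := by rw [← hcards]; exact hcardle
    _ ≤ finrank κ (LinearMap.ker (((ι π).baseChange κ) ^ i)) := hsemi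
end

section
/- Let q : M → M' be a surjective homomorphism of finitely generated free O_K-modules, of ranks n and n' respectively, and let φ : M → M and φ' : M' → M' be injective O_K-linear endomorphisms satisfying q ∘ φ = φ' ∘ q. Suppose given isomorphisms M/φ(M) ≅ ⊕_{j=1}^{n} O_K/a_jO_K and M'/φ'(M') ≅ ⊕_{j=1}^{n'} O_K/b_jO_K with nonzero elements a_j, b_j ∈ O_K satisfying v(a_1) ≥ … ≥ v(a_n) and v(b_1) ≥ … ≥ v(b_{n'}). Then n' ≤ n and v(b_j) ≤ v(a_j) for every 1 ≤ j ≤ n'. -/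
/-!
STATEMENT 15 (module-theoretic content of Proposition 4.16): for a surjection `q : M → M'` of
finite free `O_K`-modules intertwining injective endomorphisms `φ`, `φ'`, the elementary divisor
valuations satisfy `n' ≤ n` and `v(b_j) ≤ v(a_j)` for all `1 ≤ j ≤ n'`.
-/

set_option maxHeartbeats 2000000 in
set_option synthInstance.maxHeartbeats 1000000 in
theorem statement15
    -- the complete rank-one valued field `(K, v)` extending `ℚ_p`, with valuation ring `O_K = A`
    {p : ℕ} [Fact p.Prime] {K : Type*} [Field K] [Algebra ℚ_[p] K]
    (v : K → ℝ)
    (hv_mul : ∀ x y : K, x ≠ 0 → y ≠ 0 → v (x * y) = v x + v y)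
    (hv_add : ∀ x y : K, x ≠ 0 → y ≠ 0 → x + y ≠ 0 → min (v x) (v y) ≤ v (x + y))
    (hv_p : v (p : K) = 1)
    (A : ValuationSubring K)
    (hA : ∀ x : K, x ≠ 0 → (x ∈ A ↔ 0 ≤ v x))
    -- finitely generated free `O_K`-modules `M`, `M'` of ranks `n`, `n'`
    {M M' : Type*} [AddCommGroup M] [Module A M] [Module.Free A M] [Module.Finite A M]
    [AddCommGroup M'] [Module A M'] [Module.Free A M'] [Module.Finite A M']
    {n n' : ℕ} (hn : Module.finrank A M = n) (hn' : Module.finrank A M' = n')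
    -- a surjection `q : M → M'` intertwining injective endomorphisms `φ` and `φ'`
    (q : M →ₗ[A] M') (hq : Function.Surjective q)
    (φ : M →ₗ[A] M) (φ' : M' →ₗ[A] M')
    (hφ : Function.Injective φ) (hφ' : Function.Injective φ')
    (hcomm : q ∘ₗ φ = φ' ∘ₗ q)
    -- the given isomorphisms of the cokernels, with decreasing valuations
    (a : Fin n → A) (b : Fin n' → A)
    (ha0 : ∀ j, a j ≠ 0) (hb0 : ∀ j, b j ≠ 0)
    (ha : ∀ i j : Fin n, i ≤ j → v ((a j : A) : K) ≤ v ((a i : A) : K))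
    (hb : ∀ i j : Fin n', i ≤ j → v ((b j : A) : K) ≤ v ((b i : A) : K))
    (eM : (M ⧸ LinearMap.range φ) ≃ₗ[A] ((j : Fin n) → A ⧸ Ideal.span {a j}))
    (eM' : (M' ⧸ LinearMap.range φ') ≃ₗ[A] ((j : Fin n') → A ⧸ Ideal.span {b j})) :
    -- conclusion: `n' ≤ n` and `v(b_j) ≤ v(a_j)` for every `1 ≤ j ≤ n'`
    n' ≤ n ∧
      ∀ (j : ℕ) (hj' : j < n') (hj : j < n),
        v ((b ⟨j, hj'⟩ : A) : K) ≤ v ((a ⟨j, hj⟩ : A) : K) := by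
  classical
  -- basic valuation facts
  have hK0 : ∀ y : A, y ≠ 0 → ((y : K) ≠ 0) := by
    intro y hy h
    exact hy (Subtype.ext h)
  have hv1 : v (1 : K) = 0 := by
    have h := hv_mul 1 1 one_ne_zero one_ne_zero
    rw [mul_one] at h
    linarith
  have hvA : ∀ y : A, y ≠ 0 → 0 ≤ v (y : K) := by
    intro y hy
    exact (hA (y : K) (hK0 y hy)).mp y.2
  have hdvd : ∀ y z : A, y ≠ 0 → z ≠ 0 → v (y : K) ≤ v (z : K) → y ∣ z := by
    intro y z hy hz h
    have hyK := hK0 y hy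
    have hzK := hK0 z hz
    have ht : (z : K) * (y : K)⁻¹ ≠ 0 := mul_ne_zero hzK (inv_ne_zero hyK)
    have hyt : (y : K) * ((z : K) * (y : K)⁻¹) = (z : K) := by field_simp
    have hvt : 0 ≤ v ((z : K) * (y : K)⁻¹) := by
      have h1 := hv_mul (y : K) ((z : K) * (y : K)⁻¹) hyK ht
      rw [hyt] at h1
      linarith
    have htA : (z : K) * (y : K)⁻¹ ∈ A := (hA _ ht).mpr hvt
    refine ⟨⟨(z : K) * (y : K)⁻¹, htA⟩, Subtype.ext ?_⟩
    exact hyt.symm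
  have hnonunit : ∀ y : A, 0 < v (y : K) → y ∈ nonunits A := by
    intro y hy
    rw [mem_nonunits_iff]
    intro hu
    obtain ⟨z, hz⟩ := isUnit_iff_exists_inv.mp hu
    have hy0 : y ≠ 0 := by
      intro h; rw [h, zero_mul] at hz; exact zero_ne_one hz
    have hz0 : z ≠ 0 := by
      intro h; rw [h, mul_zero] at hz; exact zero_ne_one hz
    have h1 : (y : K) * (z : K) = 1 := by exact_mod_cast congrArg Subtype.val hz
    have h2 := hv_mul (y : K) (z : K) (hK0 y hy0) (hK0 z hz0)
    rw [h1, hv1] at h2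
    have := hvA z hz0
    linarith
  -- Part 1 : `n' ≤ n`
  have hn'n : n' ≤ n := by
    obtain ⟨s, hs⟩ := Module.projective_lifting_property q LinearMap.id hq
    have hsinj : Function.Injective s := by
      intro u w h
      have h1 := LinearMap.ext_iff.mp hs u
      have h2 := LinearMap.ext_iff.mp hs w
      simp only [LinearMap.comp_apply, LinearMap.id_apply] at h1 h2
      rw [← h1, ← h2, h]
    have h3 := LinearMap.finrank_le_finrank_of_injective hsinj
    rwa [hn, hn'] at h3
  refine ⟨hn'n, ?_⟩
  intro j hj' hj
  by_contra hcon
  push_neg at hcon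
  set x : A := a ⟨j, hj⟩ with hxdef
  -- the surjection on cokernels
  have hle : LinearMap.range φ ≤ Submodule.comap q (LinearMap.range φ') := by
    rintro _ ⟨m, rfl⟩
    exact ⟨q m, (LinearMap.ext_iff.mp hcomm m).symm⟩
  set Q : (M ⧸ LinearMap.range φ) →ₗ[A] (M' ⧸ LinearMap.range φ') :=
    Submodule.mapQ _ _ q hle with hQdef
  have hQ : Function.Surjective Q := by
    intro w
    obtain ⟨y', rfl⟩ := Submodule.Quotient.mk_surjective _ w
    obtain ⟨y, rfl⟩ := hq y'
    exact ⟨Submodule.Quotient.mk y, Submodule.mapQ_apply _ _ q y⟩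
  set f : ((i : Fin n) → A ⧸ Ideal.span {a i}) →ₗ[A] ((i : Fin n') → A ⧸ Ideal.span {b i}) :=
    eM'.toLinearMap ∘ₗ Q ∘ₗ eM.symm.toLinearMap with hfdef
  have hf : Function.Surjective f := by
    have : Function.Surjective (⇑eM' ∘ ⇑Q ∘ ⇑eM.symm) :=
      eM'.surjective.comp (hQ.comp eM.symm.surjective)
    exact this
  -- generators
  set e : Fin n → ((i : Fin n) → A ⧸ Ideal.span {a i}) :=
    fun i => Pi.single i (Submodule.Quotient.mk 1) with hedef
  set e' : Fin n' → ((i : Fin n') → A ⧸ Ideal.span {b i}) :=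
    fun i => Pi.single i (Submodule.Quotient.mk 1) with he'def
  have hgen : ∀ w : (i : Fin n) → A ⧸ Ideal.span {a i},
      ∃ y : Fin n → A, w = ∑ i, y i • e i := by
    intro w
    choose y hy using fun i => Submodule.Quotient.mk_surjective _ (w i)
    refine ⟨y, funext fun l => ?_⟩
    rw [Finset.sum_apply]
    have h1 : ∀ i : Fin n, (y i • e i) l =
        if l = i then (Submodule.Quotient.mk (y i) : A ⧸ Ideal.span {a l}) else 0 := by
      intro i
      rcases eq_or_ne l i with rfl | hne
      · rw [if_pos rfl]
        simp only [Pi.smul_apply, hedef, Pi.single_eq_same]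
        rw [← Submodule.Quotient.mk_smul, smul_eq_mul, mul_one]
      · simp only [Pi.smul_apply, hedef, Pi.single_eq_of_ne hne, if_neg hne, smul_zero]
    rw [Finset.sum_eq_single l (fun i _ hne => by rw [h1 i, if_neg (Ne.symm hne)])
        (fun h => absurd (Finset.mem_univ l) h)]
    have h3 := h1 l
    rw [if_pos rfl] at h3
    rw [h3]
    exact (hy l).symm
  -- x kills the high generators
  have hxe : ∀ i : Fin n, ¬ (i : ℕ) < j → x • e i = 0 := by
    intro i hi
    have hvle : v ((a i : A) : K) ≤ v ((x : A) : K) := ha ⟨j, hj⟩ i (not_lt.mp hi)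
    have hd : a i ∣ x := hdvd (a i) x (ha0 i) (ha0 _) hvle
    have hz : x • (Submodule.Quotient.mk (1 : A) : A ⧸ Ideal.span {a i}) = 0 := by
      rw [← Submodule.Quotient.mk_smul, Submodule.Quotient.mk_eq_zero, smul_eq_mul, mul_one]
      exact Ideal.mem_span_singleton.mpr hd
    funext l
    rcases eq_or_ne l i with rfl | hne
    · simp only [Pi.smul_apply, hedef, Pi.single_eq_same, Pi.zero_apply]
      exact hz
    · simp only [Pi.smul_apply, hedef, Pi.single_eq_of_ne hne, Pi.zero_apply, smul_zero]
  -- embeddings of index sets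
  set emb : Fin j → Fin n := fun k => ⟨k, k.2.trans hj⟩ with hembdef
  set emb' : Fin (j + 1) → Fin n' := fun i => ⟨i, lt_of_le_of_lt (Nat.lt_succ_iff.mp i.2) hj'⟩
    with hemb'def
  set g : Fin j → ((i : Fin n') → A ⧸ Ideal.span {b i}) := fun k => f (x • e (emb k)) with hgdef
  -- the image of `x • ⊤` lies in the span of the `j` elements `g k`
  have hspan : ∀ w' : (i : Fin n') → A ⧸ Ideal.span {b i},
      x • w' ∈ Submodule.span A (Set.range g) := by
    intro w'
    obtain ⟨w, rfl⟩ := hf w'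
    obtain ⟨y, rfl⟩ := hgen w
    rw [← map_smul, Finset.smul_sum]
    rw [map_sum]
    refine Submodule.sum_mem _ fun i _ => ?_
    rcases lt_or_ge (i : ℕ) j with hi | hi
    · rw [smul_comm, map_smul]
      refine Submodule.smul_mem _ _ (Submodule.subset_span ⟨⟨(i : ℕ), hi⟩, ?_⟩)
      rfl
    · rw [smul_comm, hxe i (not_lt.mpr hi), smul_zero, map_zero]
      exact Submodule.zero_mem _
  have hcoef : ∀ i : Fin (j + 1), ∃ c : Fin j → A,
      ∑ k, c k • g k = x • e' (emb' i) :=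
    fun i => (Submodule.mem_span_range_iff_exists_fun A).mp (hspan (e' (emb' i)))
  choose c hc using hcoef
  -- the reduction maps to the residue field
  set mA : Ideal A := IsLocalRing.maximalIdeal A with hmAdef
  have hbm : ∀ l : Fin (j + 1), Ideal.span {b (emb' l)} ≤ mA := by
    intro l
    rw [Ideal.span_le, Set.singleton_subset_iff]
    have h1 : v ((b ⟨j, hj'⟩ : A) : K) ≤ v ((b (emb' l) : A) : K) := by
      refine hb (emb' l) ⟨j, hj'⟩ ?_
      exact Nat.lt_succ_iff.mp l.2
    have h2 : 0 ≤ v ((x : A) : K) := hvA x (ha0 _)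
    exact (IsLocalRing.mem_maximalIdeal _).mpr (hnonunit _ (by linarith))
  set r : (l : Fin (j + 1)) → (A ⧸ Ideal.span {b (emb' l)}) →ₗ[A] (A ⧸ mA) :=
    fun l => Submodule.liftQ _ mA.mkQ (by rw [Submodule.ker_mkQ]; exact hbm l) with hrdef
  set R : ((i : Fin n') → A ⧸ Ideal.span {b i}) →ₗ[A] (Fin (j + 1) → A ⧸ mA) :=
    LinearMap.pi (fun l => (r l).comp (LinearMap.proj (emb' l))) with hRdef
  have hRapp : ∀ (w : (i : Fin n') → A ⧸ Ideal.span {b i}) (l : Fin (j + 1)),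
      R w l = r l (w (emb' l)) := by
    intro w l
    rw [hRdef, LinearMap.pi_apply, LinearMap.comp_apply, LinearMap.proj_apply]
  have hkill : ∀ (l : Fin (j + 1)) (z : A ⧸ Ideal.span {b (emb' l)}),
      x • z = 0 → r l z = 0 := by
    intro l z hz
    obtain ⟨y, rfl⟩ := Submodule.Quotient.mk_surjective _ z
    rw [← Submodule.Quotient.mk_smul, Submodule.Quotient.mk_eq_zero, smul_eq_mul] at hz
    have hy : y ∈ mA := by
      rcases eq_or_ne y 0 with rfl | hy0
      · exact zero_mem _
      · obtain ⟨s, hsEq⟩ := Ideal.mem_span_singleton.mp hz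
        have hxne : x ≠ 0 := ha0 _
        have hbne : b (emb' l) ≠ 0 := hb0 _
        have hsne : s ≠ 0 := by
          intro h
          rw [h, mul_zero] at hsEq
          exact mul_ne_zero hxne hy0 hsEq
        have hKEq : ((x : K)) * (y : K) = ((b (emb' l) : A) : K) * (s : K) := by
          exact_mod_cast congrArg Subtype.val hsEq
        have h1 := hv_mul (x : K) (y : K) (hK0 x hxne) (hK0 y hy0)
        have h2 := hv_mul ((b (emb' l) : A) : K) (s : K) (hK0 _ hbne) (hK0 s hsne)
        rw [hKEq, h2] at h1
        have h3 := hvA s hsne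
        have h4 : v ((b ⟨j, hj'⟩ : A) : K) ≤ v ((b (emb' l) : A) : K) :=
          hb (emb' l) ⟨j, hj'⟩ (Nat.lt_succ_iff.mp l.2)
        refine (IsLocalRing.mem_maximalIdeal _).mpr (hnonunit _ ?_)
        linarith
    rw [hrdef, Submodule.liftQ_apply, Submodule.mkQ_apply, Submodule.Quotient.mk_eq_zero]
    exact hy
  -- `R` of the standard generators of the target
  have hemb'inj : Function.Injective emb' := by
    intro u w h
    exact Fin.ext (by simpa [hemb'def] using congrArg Fin.val h)
  have hR1 : ∀ i : Fin (j + 1),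
      R (e' (emb' i)) = Pi.single i (Submodule.Quotient.mk 1 : A ⧸ mA) := by
    intro i
    funext l
    rw [hRapp]
    rcases eq_or_ne l i with rfl | hne
    · rw [he'def]
      simp only [Pi.single_eq_same]
      rw [hrdef, Submodule.liftQ_apply, Submodule.mkQ_apply]
    · have hne' : emb' l ≠ emb' i := fun h => hne (hemb'inj h)
      rw [he'def]
      simp only [Pi.single_eq_of_ne hne', Pi.single_eq_of_ne hne, map_zero]
  -- the key identity
  set t : Fin j → (Fin (j + 1) → A ⧸ mA) := fun k => R (f (e (emb k))) with htdef
  have key : ∀ i : Fin (j + 1),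
      (Pi.single i (Submodule.Quotient.mk 1 : A ⧸ mA) : Fin (j + 1) → A ⧸ mA)
        = ∑ k : Fin j, c i k • t k := by
    intro i
    set w : (i : Fin n) → A ⧸ Ideal.span {a i} := ∑ k : Fin j, c i k • e (emb k) with hw
    have h1 : x • (e' (emb' i) - f w) = 0 := by
      rw [smul_sub, sub_eq_zero, ← hc i]
      rw [← map_smul, hw, Finset.smul_sum]
      rw [Finset.sum_congr rfl fun k _ => smul_comm x (c i k) (e (emb k)), map_sum]
      refine Finset.sum_congr rfl fun k _ => ?_
      rw [map_smul]
    have h2 : R (e' (emb' i) - f w) = 0 := by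
      funext l
      have h3 : x • ((e' (emb' i) - f w) (emb' l)) = 0 := by
        have h4 := congrFun h1 (emb' l)
        simpa only [Pi.smul_apply, Pi.zero_apply] using h4
      have h5 := hkill l _ h3
      rw [hRapp, h5]
      simp
    have h4 : R (e' (emb' i)) = R (f w) := by
      rwa [map_sub, sub_eq_zero] at h2
    calc (Pi.single i (Submodule.Quotient.mk 1 : A ⧸ mA) : Fin (j + 1) → A ⧸ mA)
        = R (e' (emb' i)) := (hR1 i).symm
      _ = R (f w) := h4
      _ = ∑ k : Fin j, c i k • t k := by
          rw [hw, map_sum, map_sum]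
          refine Finset.sum_congr rfl fun k _ => ?_
          rw [map_smul, map_smul]
  -- pass to the residue field and count dimensions
  have hone : (Submodule.Quotient.mk (1 : A) : A ⧸ mA) = 1 := rfl
  have hmem : ∀ i : Fin (j + 1),
      (Pi.single i (1 : A ⧸ mA) : Fin (j + 1) → A ⧸ mA)
        ∈ Submodule.span (A ⧸ mA) (Set.range t) := by
    intro i
    rw [← hone, key i]
    refine Submodule.sum_mem _ fun k _ => ?_
    have hsm : c i k • t k = (Ideal.Quotient.mk mA (c i k)) • t k := by
      rw [← Ideal.Quotient.algebraMap_eq, algebraMap_smul]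
    rw [hsm]
    exact Submodule.smul_mem _ _ (Submodule.subset_span ⟨k, rfl⟩)
  have htop : Submodule.span (A ⧸ mA) (Set.range t) = ⊤ := by
    rw [eq_top_iff, ← (Pi.basisFun (A ⧸ mA) (Fin (j + 1))).span_eq, Submodule.span_le]
    rintro _ ⟨i, rfl⟩
    rw [Pi.basisFun_apply]
    exact hmem i
  haveI : Nontrivial (A ⧸ mA) :=
    Submodule.Quotient.nontrivial_iff.mpr
      (lt_top_iff_ne_top.mpr (Ideal.IsMaximal.ne_top inferInstance)).ne
  have hle1 : Module.finrank (A ⧸ mA) (Fin (j + 1) → A ⧸ mA) ≤ j := by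
    have h1 := finrank_span_le_card (R := A ⧸ mA) (Set.range t)
    rw [htop, finrank_top] at h1
    refine h1.trans ?_
    rw [Set.toFinset_range]
    exact (Finset.card_image_le).trans (by simp)
  have hge : Module.finrank (A ⧸ mA) (Fin (j + 1) → A ⧸ mA) = j + 1 := by
    rw [Module.finrank_pi]
    simp
  omega
end
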